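/- arXiv:2007.04613 — 8 statements merged into one kernel-verified Lean document; each statement's English description precedes it below -/
import Mathlib

section
/- For all real numbers a, b > 0, the relative entropy satisfies H(a|b) ≥ (1/2) · min{1/a, 1/b} · (a − b)², where H(a|b) := a log a − b log b − (1 + log b)(a − b). -/
open Real intervalIntegral

lemma key_le_one {x : ℝ} (hx : 0 < x) (hx1 : x ≤ 1) :
    (x - 1) ^ 2 / 2 ≤ x * Real.log x - x + 1 := by
  have hmono : ∫ t in x..1, Real.log t ≤ ∫ t in x..1, (t - 1) := by
    apply intervalIntegral.integral_mono_on hx1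
    · apply ContinuousOn.intervalIntegrable
      apply Real.continuousOn_log.mono
      intro t ht
      rw [Set.uIcc_of_le hx1] at ht
      exact ne_of_gt (lt_of_lt_of_le hx ht.1)
    · exact (continuous_id.sub continuous_const).intervalIntegrable _ _
    · intro t ht
      exact Real.log_le_sub_one_of_pos (lt_of_lt_of_le hx ht.1)
  have h1 : ∫ t in x..1, Real.log t = 1 * Real.log 1 - x * Real.log x - 1 + x :=
    integral_log
  have h2 : ∫ t in x..1, (t - 1) = ((1:ℝ)^2 - x^2)/2 - (1 - x) := by
    rw [intervalIntegral.integral_sub (continuous_id'.intervalIntegrable _ _)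
      (continuous_const.intervalIntegrable _ _)]
    simp [integral_id]
  rw [h1, h2, Real.log_one] at hmono
  nlinarith [hmono]

lemma key_ge_one {x : ℝ} (hx1 : 1 ≤ x) :
    (x - 1) ^ 2 / (2 * x) ≤ x * Real.log x - x + 1 := by
  have hx : 0 < x := lt_of_lt_of_le one_pos hx1
  have hmono : ∫ t in (1:ℝ)..x, (1 - t⁻¹ ^ 2) / 2 ≤ ∫ t in (1:ℝ)..x, Real.log t := by
    apply intervalIntegral.integral_mono_on hx1
    · apply ContinuousOn.intervalIntegrable
      apply ContinuousOn.div_const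
      apply ContinuousOn.sub continuousOn_const
      apply ContinuousOn.pow
      apply ContinuousOn.inv₀ continuousOn_id
      intro t ht
      rw [Set.uIcc_of_le hx1] at ht
      exact ne_of_gt (lt_of_lt_of_le one_pos ht.1)
    · apply ContinuousOn.intervalIntegrable
      apply Real.continuousOn_log.mono
      intro t ht
      rw [Set.uIcc_of_le hx1] at ht
      exact ne_of_gt (lt_of_lt_of_le one_pos ht.1)
    · intro t ht
      have ht0 : 0 < t := lt_of_lt_of_le one_pos ht.1
      have h1 : Real.log t⁻¹ ≤ t⁻¹ - 1 := Real.log_le_sub_one_of_pos (by positivity)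
      rw [Real.log_inv] at h1
      have h2 : 1 - t⁻¹ ≤ Real.log t := by linarith
      have h3 : (1 - t⁻¹ ^ 2) / 2 ≤ 1 - t⁻¹ := by nlinarith [sq_nonneg (1 - t⁻¹)]
      linarith
  have h1 : ∫ t in (1:ℝ)..x, Real.log t = x * Real.log x - 1 * Real.log 1 - x + 1 :=
    integral_log
  have h2 : ∫ t in (1:ℝ)..x, (1 - t⁻¹ ^ 2) / 2 = ((x - 1) - (1 - x⁻¹)) / 2 := by
    have hcont : ContinuousOn (fun t : ℝ => t⁻¹ ^ 2) (Set.uIcc 1 x) := by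
      apply ContinuousOn.pow
      apply ContinuousOn.inv₀ continuousOn_id
      intro t ht
      rw [Set.uIcc_of_le hx1] at ht
      exact ne_of_gt (lt_of_lt_of_le one_pos ht.1)
    have hi : ∫ t in (1:ℝ)..x, t⁻¹ ^ 2 = 1 - x⁻¹ := by
      have heq : ∀ t ∈ Set.uIcc (1:ℝ) x, t⁻¹ ^ 2 = t ^ (-2 : ℤ) := by
        intro t _
        simp [zpow_neg, inv_pow]
      rw [intervalIntegral.integral_congr heq]
      rw [integral_zpow (Or.inr ⟨by norm_num, Set.notMem_uIcc_of_lt one_pos hx⟩)]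
      norm_num [zpow_neg, zpow_one]
      ring
    rw [intervalIntegral.integral_div, intervalIntegral.integral_sub
      (continuous_const.intervalIntegrable _ _) (hcont.intervalIntegrable)]
    rw [hi]; simp
  rw [h1, h2, Real.log_one] at hmono
  rw [div_le_iff₀ (by positivity : (0:ℝ) < 2 * x)]
  have hinv := mul_inv_cancel₀ (ne_of_gt hx)
  nlinarith [mul_le_mul_of_nonneg_left hmono (le_of_lt hx)]

/-- Relative entropy of two positive real numbers:
`H(a|b) = a log a − b log b − (1 + log b)(a − b)`. -/
noncomputable def relEnt (a b : ℝ) : ℝ :=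
  a * Real.log a - b * Real.log b - (1 + Real.log b) * (a - b)

/-- For all `a, b > 0`, `H(a|b) ≥ (1/2) min{1/a, 1/b} (a − b)²`. -/
theorem stmt_2 (a b : ℝ) (ha : 0 < a) (hb : 0 < b) :
    (1 / 2) * min (1 / a) (1 / b) * (a - b) ^ 2 ≤ relEnt a b := by
  have hrel : relEnt a b = b * ((a/b) * Real.log (a/b) - (a/b) + 1) := by
    unfold relEnt
    rw [Real.log_div (ne_of_gt ha) (ne_of_gt hb)]
    field_simp
    ring
  rcases le_total a b with hab | hab
  · have hmin : min (1/a) (1/b) = 1/b := min_eq_right (by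
      apply one_div_le_one_div_of_le ha hab)
    have hx : 0 < a / b := by positivity
    have hx1 : a / b ≤ 1 := (div_le_one hb).mpr hab
    have h2 := mul_le_mul_of_nonneg_left (key_le_one hx hx1) (le_of_lt hb)
    rw [hmin, hrel]
    have heq : b * ((a/b - 1)^2 / 2) = 1/2 * (1/b) * (a - b)^2 := by
      field_simp
    linarith [heq ▸ h2]
  · have hmin : min (1/a) (1/b) = 1/a := min_eq_left (by
      apply one_div_le_one_div_of_le hb hab)
    have hx1 : 1 ≤ a / b := (one_le_div hb).mpr hab
    have h2 := mul_le_mul_of_nonneg_left (key_ge_one hx1) (le_of_lt hb)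
    rw [hmin, hrel]
    have heq : b * ((a/b - 1)^2 / (2 * (a/b))) = 1/2 * (1/a) * (a - b)^2 := by
      field_simp
    linarith [heq ▸ h2]
end

section
/- Let (X, μ) be a measure space and let ρ, ρ̄ : X → (0, ∞) be measurable functions that are μ-integrable. Then (∫_X |ρ̄ − ρ| dμ)² ≤ 2 (∫_X ρ̄ dμ + ∫_X ρ dμ) · ∫_X H(ρ̄(x)|ρ(x)) dμ(x), where H(a|b) := a log a − b log b − (1 + log b)(a − b) and the integral of the nonnegative function H(ρ̄|ρ) is taken in [0, ∞]. -/
open MeasureTheory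

lemma sq_sqrt_sub_le_relEnt {a b : ℝ} (ha : 0 < a) (hb : 0 < b) :
    (Real.sqrt a - Real.sqrt b) ^ 2 ≤ relEnt a b := by
  have hsa : Real.sqrt a ^ 2 = a := Real.sq_sqrt ha.le
  have hsb : Real.sqrt b ^ 2 = b := Real.sq_sqrt hb.le
  have hsap : 0 < Real.sqrt a := Real.sqrt_pos.2 ha
  have hsbp : 0 < Real.sqrt b := Real.sqrt_pos.2 hb
  have h1 : 1 - Real.sqrt b / Real.sqrt a ≤ Real.log a / 2 - Real.log b / 2 := by
    have h := Real.one_sub_inv_le_log_of_pos (div_pos hsap hsbp)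
    rwa [Real.log_div hsap.ne' hsbp.ne', inv_div, Real.log_sqrt ha.le,
      Real.log_sqrt hb.le] at h
  have h2 : (1 - Real.sqrt b / Real.sqrt a) * Real.sqrt a = Real.sqrt a - Real.sqrt b := by
    field_simp
  have h3 : Real.sqrt a - Real.sqrt b ≤ (Real.log a / 2 - Real.log b / 2) * Real.sqrt a := by
    rw [← h2]; exact mul_le_mul_of_nonneg_right h1 hsap.le
  unfold relEnt
  nlinarith [mul_le_mul_of_nonneg_right h3 (le_of_lt (by positivity : (0:ℝ) < 2 * Real.sqrt a))]

lemma relEnt_nonneg {a b : ℝ} (ha : 0 < a) (hb : 0 < b) : 0 ≤ relEnt a b :=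
  le_trans (sq_nonneg _) (sq_sqrt_sub_le_relEnt ha hb)

lemma abs_sub_le_sqrt_mul {a b : ℝ} (ha : 0 < a) (hb : 0 < b) :
    |a - b| ≤ Real.sqrt (2 * (a + b)) * Real.sqrt (relEnt a b) := by
  have hsa : Real.sqrt a ^ 2 = a := Real.sq_sqrt ha.le
  have hsb : Real.sqrt b ^ 2 = b := Real.sq_sqrt hb.le
  have h1 : |a - b| = |Real.sqrt a - Real.sqrt b| * (Real.sqrt a + Real.sqrt b) := by
    rw [← abs_of_nonneg (by positivity : (0:ℝ) ≤ Real.sqrt a + Real.sqrt b), ← abs_mul]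
    congr 1; nlinarith
  rw [h1]
  have h2 : |Real.sqrt a - Real.sqrt b| ≤ Real.sqrt (relEnt a b) := by
    rw [← Real.sqrt_sq_eq_abs]
    exact Real.sqrt_le_sqrt (sq_sqrt_sub_le_relEnt ha hb)
  have h3 : Real.sqrt a + Real.sqrt b ≤ Real.sqrt (2 * (a + b)) := by
    rw [← Real.sqrt_sq (by positivity : (0:ℝ) ≤ Real.sqrt a + Real.sqrt b)]
    apply Real.sqrt_le_sqrt; nlinarith [sq_nonneg (Real.sqrt a - Real.sqrt b)]
  calc |Real.sqrt a - Real.sqrt b| * (Real.sqrt a + Real.sqrt b)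
      ≤ Real.sqrt (relEnt a b) * Real.sqrt (2 * (a + b)) :=
        mul_le_mul h2 h3 (by positivity) (Real.sqrt_nonneg _)
    _ = _ := mul_comm _ _

lemma ofReal_sqrt_rpow_two {c : ℝ} (hc : 0 ≤ c) :
    (ENNReal.ofReal (Real.sqrt c)) ^ (2:ℝ) = ENNReal.ofReal c := by
  rw [show (2:ℝ) = ((2:ℕ):ℝ) by norm_num, ENNReal.rpow_natCast,
    ← ENNReal.ofReal_pow (Real.sqrt_nonneg _), Real.sq_sqrt hc]

/-- `(∫ |ρ̄ − ρ| dμ)² ≤ 2 (∫ ρ̄ dμ + ∫ ρ dμ) ∫ H(ρ̄|ρ) dμ`, the integral of the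
nonnegative relative entropy being taken in the extended sense. -/
theorem stmt_3 {X : Type*} [MeasurableSpace X] (μ : Measure X)
    (ρ ρ' : X → ℝ) (hρm : Measurable ρ) (hρ'm : Measurable ρ')
    (hρpos : ∀ x, 0 < ρ x) (hρ'pos : ∀ x, 0 < ρ' x)
    (hρi : Integrable ρ μ) (hρ'i : Integrable ρ' μ) :
    ENNReal.ofReal ((∫ x, |ρ' x - ρ x| ∂μ) ^ 2) ≤
      2 * (ENNReal.ofReal (∫ x, ρ' x ∂μ) + ENNReal.ofReal (∫ x, ρ x ∂μ)) *
        ∫⁻ x, ENNReal.ofReal (relEnt (ρ' x) (ρ x)) ∂μ := by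
  have hRm : Measurable fun x => relEnt (ρ' x) (ρ x) := by
    unfold relEnt
    exact ((hρ'm.mul (Real.measurable_log.comp hρ'm)).sub
      (hρm.mul (Real.measurable_log.comp hρm))).sub
      (((measurable_const.add (Real.measurable_log.comp hρm))).mul (hρ'm.sub hρm))
  set F : X → ENNReal := fun x => ENNReal.ofReal (Real.sqrt (2 * (ρ' x + ρ x))) with hFdef
  set G : X → ENNReal := fun x => ENNReal.ofReal (Real.sqrt (relEnt (ρ' x) (ρ x))) with hGdef
  have hF : Measurable F :=
    ((measurable_const.mul (hρ'm.add hρm)).sqrt).ennreal_ofReal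
  have hG : Measurable G := (hRm.sqrt).ennreal_ofReal
  have hF2 : ∀ x, F x ^ (2:ℝ) = ENNReal.ofReal (2 * (ρ' x + ρ x)) := fun x =>
    ofReal_sqrt_rpow_two (by nlinarith [(hρpos x), (hρ'pos x)])
  have hG2 : ∀ x, G x ^ (2:ℝ) = ENNReal.ofReal (relEnt (ρ' x) (ρ x)) := fun x =>
    ofReal_sqrt_rpow_two (relEnt_nonneg (hρ'pos x) (hρpos x))
  have hint1 : ENNReal.ofReal (∫ x, ρ' x ∂μ) = ∫⁻ x, ENNReal.ofReal (ρ' x) ∂μ :=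
    ofReal_integral_eq_lintegral_ofReal hρ'i (ae_of_all _ fun x => (hρ'pos x).le)
  have hint2 : ENNReal.ofReal (∫ x, ρ x ∂μ) = ∫⁻ x, ENNReal.ofReal (ρ x) ∂μ :=
    ofReal_integral_eq_lintegral_ofReal hρi (ae_of_all _ fun x => (hρpos x).le)
  have hA : ∫⁻ x, F x ^ (2:ℝ) ∂μ =
      2 * (ENNReal.ofReal (∫ x, ρ' x ∂μ) + ENNReal.ofReal (∫ x, ρ x ∂μ)) := by
    calc ∫⁻ x, F x ^ (2:ℝ) ∂μ
        = ∫⁻ x, 2 * (ENNReal.ofReal (ρ' x) + ENNReal.ofReal (ρ x)) ∂μ := by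
          apply lintegral_congr; intro x
          rw [hF2 x, ENNReal.ofReal_mul (by norm_num),
            ENNReal.ofReal_add (hρ'pos x).le (hρpos x).le]
          norm_num
      _ = 2 * ∫⁻ x, (ENNReal.ofReal (ρ' x) + ENNReal.ofReal (ρ x)) ∂μ :=
          lintegral_const_mul 2 (hρ'm.ennreal_ofReal.add hρm.ennreal_ofReal)
      _ = 2 * (ENNReal.ofReal (∫ x, ρ' x ∂μ) + ENNReal.ofReal (∫ x, ρ x ∂μ)) := by
          rw [lintegral_add_left hρ'm.ennreal_ofReal, hint1, hint2]
  have hB : ∫⁻ x, G x ^ (2:ℝ) ∂μ = ∫⁻ x, ENNReal.ofReal (relEnt (ρ' x) (ρ x)) ∂μ :=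
    lintegral_congr fun x => hG2 x
  have habs : Integrable (fun x => |ρ' x - ρ x|) μ := (hρ'i.sub hρi).abs
  have hLHS : ENNReal.ofReal ((∫ x, |ρ' x - ρ x| ∂μ) ^ 2) =
      (∫⁻ x, ENNReal.ofReal |ρ' x - ρ x| ∂μ) ^ 2 := by
    rw [ENNReal.ofReal_pow (integral_nonneg fun x => abs_nonneg _),
      ofReal_integral_eq_lintegral_ofReal habs (ae_of_all _ fun x => abs_nonneg _)]
  have key : ∫⁻ x, ENNReal.ofReal |ρ' x - ρ x| ∂μ ≤
      (∫⁻ x, F x ^ (2:ℝ) ∂μ) ^ (1/(2:ℝ)) * (∫⁻ x, G x ^ (2:ℝ) ∂μ) ^ (1/(2:ℝ)) := by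
    refine le_trans (lintegral_mono fun x => ?_)
      (ENNReal.lintegral_mul_le_Lp_mul_Lq μ ⟨by norm_num, by norm_num, by norm_num⟩
        hF.aemeasurable hG.aemeasurable)
    show ENNReal.ofReal |ρ' x - ρ x| ≤ F x * G x
    rw [hFdef, hGdef, ← ENNReal.ofReal_mul (Real.sqrt_nonneg _)]
    exact ENNReal.ofReal_le_ofReal (abs_sub_le_sqrt_mul (hρ'pos x) (hρpos x))
  rw [hLHS, ← hA, ← hB]
  calc (∫⁻ x, ENNReal.ofReal |ρ' x - ρ x| ∂μ) ^ 2
      ≤ ((∫⁻ x, F x ^ (2:ℝ) ∂μ) ^ (1/(2:ℝ)) * (∫⁻ x, G x ^ (2:ℝ) ∂μ) ^ (1/(2:ℝ))) ^ 2 := by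
        exact pow_le_pow_left' key 2
    _ = (∫⁻ x, F x ^ (2:ℝ) ∂μ) * (∫⁻ x, G x ^ (2:ℝ) ∂μ) := by
        rw [mul_pow, ← ENNReal.rpow_natCast (_ ^ (1/(2:ℝ))) 2,
          ← ENNReal.rpow_natCast ((∫⁻ x, G x ^ (2:ℝ) ∂μ) ^ (1/(2:ℝ))) 2,
          ← ENNReal.rpow_mul, ← ENNReal.rpow_mul]
        norm_num
end

section
/- Let (X, μ) be a measure space and let f, g : X → (0, ∞) be measurable functions with ∫_X f dμ ≤ 1 and ∫_X g dμ ≤ 1. Then (∫_X |f − g| dμ)² ≤ 4 ∫_X H(f(x)|g(x)) dμ(x), where H(a|b) := a log a − b log b − (1 + log b)(a − b) and the right-hand integral is taken in [0, ∞]. (Csiszár–Kullback-type inequality: in particular, if f_n and g are probability densities and ∫ H(f_n|g) dμ → 0, then f_n → g in L¹.) -/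
open MeasureTheory

lemma key_ineq {a b : ℝ} (ha : 0 < a) (hb : 0 < b) :
    (a - b) ^ 2 ≤ 2 * relEnt a b * (a + b) := by
  have h1 := sq_sqrt_sub_le_relEnt ha hb
  set s := Real.sqrt a with hs
  set t := Real.sqrt b with ht
  have hsa : s ^ 2 = a := Real.sq_sqrt ha.le
  have htb : t ^ 2 = b := Real.sq_sqrt hb.le
  have h2 : (s + t) ^ 2 ≤ 2 * (a + b) := by nlinarith [sq_nonneg (s - t)]
  have h3 : (a - b) ^ 2 = (s - t) ^ 2 * (s + t) ^ 2 := by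
    rw [← hsa, ← htb]; ring
  rw [h3]
  calc (s - t) ^ 2 * (s + t) ^ 2 ≤ relEnt a b * (2 * (a + b)) :=
        mul_le_mul h1 h2 (sq_nonneg _) ((sq_nonneg _).trans h1)
    _ = 2 * relEnt a b * (a + b) := by ring

/-- Csiszár–Kullback-type inequality: if `∫ f dμ ≤ 1` and `∫ g dμ ≤ 1`, then
`(∫ |f − g| dμ)² ≤ 4 ∫ H(f|g) dμ`, the right-hand integral being taken in `[0, ∞]`. -/
theorem stmt_4 {X : Type*} [MeasurableSpace X] (μ : Measure X)
    (f g : X → ℝ) (hfm : Measurable f) (hgm : Measurable g)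
    (hfpos : ∀ x, 0 < f x) (hgpos : ∀ x, 0 < g x)
    (hfi : Integrable f μ) (hgi : Integrable g μ)
    (hf1 : ∫ x, f x ∂μ ≤ 1) (hg1 : ∫ x, g x ∂μ ≤ 1) :
    ENNReal.ofReal ((∫ x, |f x - g x| ∂μ) ^ 2) ≤
      4 * ∫⁻ x, ENNReal.ofReal (relEnt (f x) (g x)) ∂μ := by
  set I := ∫⁻ x, ENNReal.ofReal (relEnt (f x) (g x)) ∂μ with hI
  have hmpos : ∀ x, 0 < f x + g x := fun x => add_pos (hfpos x) (hgpos x)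
  -- the two functions for Cauchy–Schwarz
  set F : X → ENNReal := fun x => ENNReal.ofReal (|f x - g x| / Real.sqrt (f x + g x)) with hF
  set G : X → ENNReal := fun x => ENNReal.ofReal (Real.sqrt (f x + g x)) with hG
  have hFm : AEMeasurable F μ :=
    (((hfm.sub hgm).abs.div ((hfm.add hgm).sqrt)).ennreal_ofReal).aemeasurable
  have hGm : AEMeasurable G μ := (((hfm.add hgm).sqrt).ennreal_ofReal).aemeasurable
  have hFG : ∀ x, (F * G) x = ENNReal.ofReal |f x - g x| := by
    intro x
    have hsq : Real.sqrt (f x + g x) ≠ 0 := (Real.sqrt_pos.2 (hmpos x)).ne'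
    simp only [Pi.mul_apply, hF, hG]
    rw [← ENNReal.ofReal_mul (div_nonneg (abs_nonneg _) (Real.sqrt_nonneg _)),
      div_mul_cancel₀ _ hsq]
  have hF2 : ∀ x, F x ^ (2:ℝ) = ENNReal.ofReal ((f x - g x) ^ 2 / (f x + g x)) := by
    intro x
    rw [hF, ENNReal.ofReal_rpow_of_nonneg (div_nonneg (abs_nonneg _) (Real.sqrt_nonneg _))
      (by norm_num)]
    congr 1
    rw [show (2:ℝ) = ((2:ℕ):ℝ) by norm_num, Real.rpow_natCast, div_pow, sq_abs,
      Real.sq_sqrt (hmpos x).le]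
  have hG2 : ∀ x, G x ^ (2:ℝ) = ENNReal.ofReal (f x + g x) := by
    intro x
    rw [hG, ENNReal.ofReal_rpow_of_nonneg (Real.sqrt_nonneg _) (by norm_num)]
    congr 1
    rw [show (2:ℝ) = ((2:ℕ):ℝ) by norm_num, Real.rpow_natCast, Real.sq_sqrt (hmpos x).le]
  -- Cauchy–Schwarz
  have hCS := ENNReal.lintegral_mul_le_Lp_mul_Lq μ
    ((Real.holderConjugate_iff (p := 2) (q := 2)).mpr ⟨by norm_num, by norm_num⟩) hFm hGm
  rw [lintegral_congr hFG] at hCS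
  -- rewrite LHS
  have habs_nonneg : (0:ℝ) ≤ ∫ x, |f x - g x| ∂μ :=
    integral_nonneg fun x => abs_nonneg _
  have hsubi : Integrable (fun x => |f x - g x|) μ := (hfi.sub hgi).abs
  have hL : ENNReal.ofReal ((∫ x, |f x - g x| ∂μ) ^ 2)
      = (∫⁻ x, ENNReal.ofReal |f x - g x| ∂μ) ^ 2 := by
    rw [ENNReal.ofReal_pow habs_nonneg,
      ofReal_integral_eq_lintegral_ofReal hsubi (Filter.Eventually.of_forall fun x => abs_nonneg _)]
  rw [hL]
  -- square the Cauchy–Schwarz inequality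
  have hCS2 : (∫⁻ x, ENNReal.ofReal |f x - g x| ∂μ) ^ 2 ≤
      (∫⁻ x, F x ^ (2:ℝ) ∂μ) * (∫⁻ x, G x ^ (2:ℝ) ∂μ) := by
    calc (∫⁻ x, ENNReal.ofReal |f x - g x| ∂μ) ^ 2
        ≤ ((∫⁻ x, F x ^ (2:ℝ) ∂μ) ^ (1/(2:ℝ)) * (∫⁻ x, G x ^ (2:ℝ) ∂μ) ^ (1/(2:ℝ))) ^ 2 :=
          by rw [pow_two, pow_two]; exact mul_le_mul' hCS hCS
      _ = (∫⁻ x, F x ^ (2:ℝ) ∂μ) * (∫⁻ x, G x ^ (2:ℝ) ∂μ) := by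
          rw [mul_pow, ← ENNReal.rpow_natCast (_ ^ (1/(2:ℝ))) 2,
            ← ENNReal.rpow_natCast ((∫⁻ x, G x ^ (2:ℝ) ∂μ) ^ (1/(2:ℝ))) 2,
            ← ENNReal.rpow_mul, ← ENNReal.rpow_mul]
          norm_num
  -- bound ∫ F² by 2 I
  have hFbound : (∫⁻ x, F x ^ (2:ℝ) ∂μ) ≤ 2 * I := by
    have hpt : ∀ x, F x ^ (2:ℝ) ≤ 2 * ENNReal.ofReal (relEnt (f x) (g x)) := by
      intro x
      rw [hF2 x]
      have h := key_ineq (hfpos x) (hgpos x)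
      have hdiv : (f x - g x) ^ 2 / (f x + g x) ≤ 2 * relEnt (f x) (g x) := by
        rw [div_le_iff₀ (hmpos x)]
        exact h
      calc ENNReal.ofReal ((f x - g x) ^ 2 / (f x + g x))
          ≤ ENNReal.ofReal (2 * relEnt (f x) (g x)) := ENNReal.ofReal_le_ofReal hdiv
        _ = 2 * ENNReal.ofReal (relEnt (f x) (g x)) := by
            rw [ENNReal.ofReal_mul (by norm_num)]
            norm_num
    calc (∫⁻ x, F x ^ (2:ℝ) ∂μ)
        ≤ ∫⁻ x, 2 * ENNReal.ofReal (relEnt (f x) (g x)) ∂μ :=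
          lintegral_mono hpt
      _ = 2 * I := lintegral_const_mul' _ _ (by norm_num)
  -- bound ∫ G² by 2
  have hGbound : (∫⁻ x, G x ^ (2:ℝ) ∂μ) ≤ 2 := by
    have : (∫⁻ x, G x ^ (2:ℝ) ∂μ) = ∫⁻ x, ENNReal.ofReal (f x + g x) ∂μ :=
      lintegral_congr hG2
    have heq : ENNReal.ofReal (∫ x, (f x + g x) ∂μ) = ∫⁻ x, ENNReal.ofReal (f x + g x) ∂μ :=
      ofReal_integral_eq_lintegral_ofReal (hfi.add hgi)
        (Filter.Eventually.of_forall fun x => (hmpos x).le)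
    rw [this, ← heq]
    have h2 : ∫ x, (f x + g x) ∂μ ≤ 2 := by
      rw [integral_add hfi hgi]; linarith
    calc ENNReal.ofReal (∫ x, (f x + g x) ∂μ) ≤ ENNReal.ofReal 2 :=
          ENNReal.ofReal_le_ofReal h2
      _ = 2 := by norm_num
  calc (∫⁻ x, ENNReal.ofReal |f x - g x| ∂μ) ^ 2
      ≤ (∫⁻ x, F x ^ (2:ℝ) ∂μ) * (∫⁻ x, G x ^ (2:ℝ) ∂μ) := hCS2
    _ ≤ (2 * I) * 2 := mul_le_mul' hFbound hGbound
    _ = 4 * I := by ring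
end

section
/- Let f : ℝ^d × ℝ^d → [0, ∞) be measurable (a phase-space density f = f(x, v)) and let φ : ℝ^d → [0, ∞) be measurable. Define the local density ρ(x) := ∫_{ℝ^d} f(x, v) dv and let u : ℝ^d → ℝ^d be any measurable function satisfying ρ(x) u(x) = ∫_{ℝ^d} v f(x, v) dv for almost every x. Then ∫∫_{ℝ^d × ℝ^d} φ(x − y) |u(x) − u(y)|² ρ(x) ρ(y) dx dy ≤ ∫∫∫∫_{ℝ^{2d} × ℝ^{2d}} φ(x − y) |v − w|² f(x, v) f(y, w) dx dy dv dw, where both sides are nonnegative extended-real integrals. -/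
open MeasureTheory
open scoped ENNReal RealInnerProductSpace

private lemma ofReal_int_le {α : Type*} [MeasurableSpace α] (μ : Measure α) (f : α → ℝ) :
    ENNReal.ofReal (∫ x, f x ∂μ) ≤ ∫⁻ x, ENNReal.ofReal (f x) ∂μ := by
  by_cases hf : Integrable f μ
  · calc ENNReal.ofReal (∫ x, f x ∂μ) ≤ ENNReal.ofReal (∫ x, max (f x) 0 ∂μ) := by
          apply ENNReal.ofReal_le_ofReal
          exact integral_mono hf hf.pos_part fun x => le_max_left _ _
    _ = ∫⁻ x, ENNReal.ofReal (max (f x) 0) ∂μ :=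
          ofReal_integral_eq_lintegral_ofReal hf.pos_part
            (Filter.Eventually.of_forall fun x => le_max_right _ _)
    _ = ∫⁻ x, ENNReal.ofReal (f x) ∂μ := by
          congr 1; funext x
          rcases le_or_gt (f x) 0 with h | h
          · simp [max_eq_right h, ENNReal.ofReal_eq_zero.2 h]
          · simp [max_eq_left h.le]
  · rw [integral_undef hf]; simp


private lemma key0 {E : Type*} [NormedAddCommGroup E] [InnerProductSpace ℝ E]
    [MeasurableSpace E] [BorelSpace E] [SecondCountableTopology E] [CompleteSpace E]
    (μ : Measure E) [SigmaFinite μ] (g h : E → ℝ)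
    (hg : Measurable g) (hg0 : ∀ v, 0 ≤ g v)
    (hh : Measurable h) (hh0 : ∀ v, 0 ≤ h v) (A B : E)
    (hA : (∫ v, g v ∂μ) • A = ∫ v, g v • v ∂μ) (hB : (∫ w, h w ∂μ) • B = ∫ w, h w • w ∂μ) :
    ENNReal.ofReal (‖A - B‖ ^ 2 * (∫ v, g v ∂μ) * (∫ w, h w ∂μ)) ≤
      ∫⁻ v, ∫⁻ w, ENNReal.ofReal (‖v - w‖ ^ 2 * g v * h w) ∂μ ∂μ := by
  set a := ∫ v, g v ∂μ with ha'
  set b := ∫ w, h w ∂μ with hb'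
  have ha0 : 0 ≤ a := integral_nonneg hg0
  have hb0 : 0 ≤ b := integral_nonneg hh0
  rcases eq_or_lt_of_le ha0 with haz | hapos
  · simp [← haz]
  rcases eq_or_lt_of_le hb0 with hbz | hbpos
  · simp [← hbz]
  by_cases hAB : A = B
  · simp [hAB]
  have hgi : Integrable g μ := by
    by_contra hc; rw [ha', integral_undef hc] at hapos; exact lt_irrefl _ hapos
  have hhi : Integrable h μ := by
    by_contra hc; rw [hb', integral_undef hc] at hbpos; exact lt_irrefl _ hbpos
  set K := ∫⁻ v, ∫⁻ w, ENNReal.ofReal (‖v - w‖ ^ 2 * g v * h w) ∂μ ∂μ with hK'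
  rcases eq_or_ne K ⊤ with hK | hK
  · exact hK ▸ le_top
  -- masses
  have hmg : ∫⁻ v, ENNReal.ofReal (g v) ∂μ = ENNReal.ofReal a :=
    (ofReal_integral_eq_lintegral_ofReal hgi (Filter.Eventually.of_forall hg0)).symm
  have hmh : ∫⁻ w, ENNReal.ofReal (h w) ∂μ = ENNReal.ofReal b :=
    (ofReal_integral_eq_lintegral_ofReal hhi (Filter.Eventually.of_forall hh0)).symm
  -- Tonelli product helper
  have hprod : ∀ F G : E → ℝ≥0∞, Measurable F → Measurable G →
      ∫⁻ v, ∫⁻ w, F v * G w ∂μ ∂μ = (∫⁻ v, F v ∂μ) * (∫⁻ w, G w ∂μ) := fun F G hF hG =>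
    lintegral_lintegral_mul hF.aemeasurable hG.aemeasurable
  -- measurability of basic product functions
  have mgh : Measurable fun p : E × E => g p.1 * h p.2 :=
    (hg.comp measurable_fst).mul (hh.comp measurable_snd)
  have mnorm : Measurable fun p : E × E => ‖p.1 - p.2‖ :=
    (measurable_fst.sub measurable_snd).norm
  have hgh : ∫⁻ v, ∫⁻ w, ENNReal.ofReal (g v * h w) ∂μ ∂μ
      = ENNReal.ofReal a * ENNReal.ofReal b := by
    have e1 : ∀ v w : E, ENNReal.ofReal (g v * h w)
        = ENNReal.ofReal (g v) * ENNReal.ofReal (h w) := fun v w => ENNReal.ofReal_mul (hg0 v)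
    simp_rw [e1]
    rw [hprod _ _ (hg.ennreal_ofReal) (hh.ennreal_ofReal),
      hmg, hmh]
  -- the first-moment lintegrals
  set M1 := ∫⁻ v, ENNReal.ofReal (‖v‖ * g v) ∂μ with hM1'
  set M2 := ∫⁻ w, ENNReal.ofReal (‖w‖ * h w) ∂μ with hM2'
  have mMg : Measurable fun v : E => ENNReal.ofReal (‖v‖ * g v) :=
    (measurable_norm.mul hg).ennreal_ofReal
  have mMh : Measurable fun w : E => ENNReal.ofReal (‖w‖ * h w) :=
    (measurable_norm.mul hh).ennreal_ofReal
  set N := ∫⁻ v, ∫⁻ w, ENNReal.ofReal (‖v - w‖ * g v * h w) ∂μ ∂μ with hN'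
  have mN : Measurable fun p : E × E => ENNReal.ofReal (‖p.1 - p.2‖ * g p.1 * h p.2) :=
    ((mnorm.mul (hg.comp measurable_fst)).mul
      (hh.comp measurable_snd)).ennreal_ofReal
  have mK : Measurable fun p : E × E => ENNReal.ofReal (‖p.1 - p.2‖ ^ 2 * g p.1 * h p.2) :=
    (((mnorm.pow measurable_const).mul
      (hg.comp measurable_fst)).mul (hh.comp measurable_snd)).ennreal_ofReal
  have hNfin : N ≠ ⊤ := by
    have hle : N ≤ K + ENNReal.ofReal a * ENNReal.ofReal b := by
      have pt : ∀ v w : E, ENNReal.ofReal (‖v - w‖ * g v * h w)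
          ≤ ENNReal.ofReal (‖v - w‖ ^ 2 * g v * h w) + ENNReal.ofReal (g v * h w) := by
        intro v w
        refine le_trans (ENNReal.ofReal_le_ofReal ?_) ENNReal.ofReal_add_le
        nlinarith [mul_nonneg (mul_nonneg (sq_nonneg (‖v - w‖ - 1)) (hg0 v)) (hh0 w),
          mul_nonneg (hg0 v) (hh0 w), norm_nonneg (v - w)]
      calc N ≤ ∫⁻ v, ∫⁻ w, (ENNReal.ofReal (‖v - w‖ ^ 2 * g v * h w)
            + ENNReal.ofReal (g v * h w)) ∂μ ∂μ :=
          lintegral_mono fun v => lintegral_mono fun w => pt v w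
        _ = K + ENNReal.ofReal a * ENNReal.ofReal b := by
          have i1 : ∀ v : E, (∫⁻ w, (ENNReal.ofReal (‖v - w‖ ^ 2 * g v * h w)
              + ENNReal.ofReal (g v * h w)) ∂μ)
              = (∫⁻ w, ENNReal.ofReal (‖v - w‖ ^ 2 * g v * h w) ∂μ)
                + ∫⁻ w, ENNReal.ofReal (g v * h w) ∂μ :=
            fun v => lintegral_add_left (mK.comp (measurable_prodMk_left)) _
          simp_rw [i1]
          rw [lintegral_add_left
            (Measurable.lintegral_prod_right
              (f := fun v w => ENNReal.ofReal (‖v - w‖ ^ 2 * g v * h w)) mK), hgh, ← hK']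
    exact ne_top_of_le_ne_top (ENNReal.add_ne_top.2
      ⟨hK, ENNReal.mul_ne_top ENNReal.ofReal_ne_top ENNReal.ofReal_ne_top⟩) hle
  -- moment comparison
  have cmp1 : M1 * ENNReal.ofReal b ≤ N + ENNReal.ofReal a * M2 := by
    have pt : ∀ v w : E, ENNReal.ofReal (‖v‖ * g v) * ENNReal.ofReal (h w)
        ≤ ENNReal.ofReal (‖v - w‖ * g v * h w)
          + ENNReal.ofReal (g v) * ENNReal.ofReal (‖w‖ * h w) := by
      intro v w
      rw [← ENNReal.ofReal_mul (mul_nonneg (norm_nonneg v) (hg0 v)),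
        ← ENNReal.ofReal_mul (hg0 v)]
      refine le_trans (ENNReal.ofReal_le_ofReal ?_) ENNReal.ofReal_add_le
      have h3 : ‖v‖ ≤ ‖v - w‖ + ‖w‖ := by simpa using norm_add_le (v - w) w
      nlinarith [mul_nonneg (hg0 v) (hh0 w), norm_nonneg w, hg0 v, hh0 w]
    calc M1 * ENNReal.ofReal b
        = ∫⁻ v, ∫⁻ w, ENNReal.ofReal (‖v‖ * g v) * ENNReal.ofReal (h w) ∂μ ∂μ := by
          rw [hprod _ _ mMg (hh.ennreal_ofReal), hmh]
      _ ≤ ∫⁻ v, ∫⁻ w, (ENNReal.ofReal (‖v - w‖ * g v * h w)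
            + ENNReal.ofReal (g v) * ENNReal.ofReal (‖w‖ * h w)) ∂μ ∂μ :=
          lintegral_mono fun v => lintegral_mono fun w => pt v w
      _ = N + ENNReal.ofReal a * M2 := by
          have i1 : ∀ v : E, (∫⁻ w, (ENNReal.ofReal (‖v - w‖ * g v * h w)
              + ENNReal.ofReal (g v) * ENNReal.ofReal (‖w‖ * h w)) ∂μ)
              = (∫⁻ w, ENNReal.ofReal (‖v - w‖ * g v * h w) ∂μ)
                + ∫⁻ w, ENNReal.ofReal (g v) * ENNReal.ofReal (‖w‖ * h w) ∂μ :=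
            fun v => lintegral_add_left (mN.comp (measurable_prodMk_left)) _
          simp_rw [i1]
          rw [lintegral_add_left
            (Measurable.lintegral_prod_right
              (f := fun v w => ENNReal.ofReal (‖v - w‖ * g v * h w)) mN),
            hprod _ _ (hg.ennreal_ofReal) mMh, hmg, ← hN']
  have cmp2 : ENNReal.ofReal a * M2 ≤ N + M1 * ENNReal.ofReal b := by
    have pt : ∀ v w : E, ENNReal.ofReal (g v) * ENNReal.ofReal (‖w‖ * h w)
        ≤ ENNReal.ofReal (‖v - w‖ * g v * h w)
          + ENNReal.ofReal (‖v‖ * g v) * ENNReal.ofReal (h w) := by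
      intro v w
      rw [← ENNReal.ofReal_mul (hg0 v),
        ← ENNReal.ofReal_mul (mul_nonneg (norm_nonneg v) (hg0 v))]
      refine le_trans (ENNReal.ofReal_le_ofReal ?_) ENNReal.ofReal_add_le
      have h3 : ‖w‖ ≤ ‖v - w‖ + ‖v‖ := by
        have := norm_add_le (w - v) v
        simpa [norm_sub_rev v w] using this
      nlinarith [mul_nonneg (hg0 v) (hh0 w), norm_nonneg v, hg0 v, hh0 w]
    calc ENNReal.ofReal a * M2
        = ∫⁻ v, ∫⁻ w, ENNReal.ofReal (g v) * ENNReal.ofReal (‖w‖ * h w) ∂μ ∂μ := by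
          rw [hprod _ _ (hg.ennreal_ofReal) mMh, hmg]
      _ ≤ ∫⁻ v, ∫⁻ w, (ENNReal.ofReal (‖v - w‖ * g v * h w)
            + ENNReal.ofReal (‖v‖ * g v) * ENNReal.ofReal (h w)) ∂μ ∂μ :=
          lintegral_mono fun v => lintegral_mono fun w => pt v w
      _ = N + M1 * ENNReal.ofReal b := by
          have i1 : ∀ v : E, (∫⁻ w, (ENNReal.ofReal (‖v - w‖ * g v * h w)
              + ENNReal.ofReal (‖v‖ * g v) * ENNReal.ofReal (h w)) ∂μ)
              = (∫⁻ w, ENNReal.ofReal (‖v - w‖ * g v * h w) ∂μ)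
                + ∫⁻ w, ENNReal.ofReal (‖v‖ * g v) * ENNReal.ofReal (h w) ∂μ :=
            fun v => lintegral_add_left (mN.comp (measurable_prodMk_left)) _
          simp_rw [i1]
          rw [lintegral_add_left
            (Measurable.lintegral_prod_right
              (f := fun v w => ENNReal.ofReal (‖v - w‖ * g v * h w)) mN),
            hprod _ _ mMg (hh.ennreal_ofReal), hmh, ← hN']
  have ha0' : ENNReal.ofReal a ≠ 0 := (ENNReal.ofReal_pos.2 hapos).ne'
  have hb0' : ENNReal.ofReal b ≠ 0 := (ENNReal.ofReal_pos.2 hbpos).ne'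
  have heqg : ∀ v : E, ENNReal.ofReal ‖g v • v‖ = ENNReal.ofReal (‖v‖ * g v) := by
    intro v; rw [norm_smul, Real.norm_eq_abs, abs_of_nonneg (hg0 v), mul_comm]
  have heqh : ∀ w : E, ENNReal.ofReal ‖h w • w‖ = ENNReal.ofReal (‖w‖ * h w) := by
    intro w; rw [norm_smul, Real.norm_eq_abs, abs_of_nonneg (hh0 w), mul_comm]
  have h21 : M1 = ⊤ → M2 = ⊤ := by
    intro hM1top
    by_contra h2
    have hfin : N + ENNReal.ofReal a * M2 ≠ ⊤ :=
      ENNReal.add_ne_top.2 ⟨hNfin, ENNReal.mul_ne_top ENNReal.ofReal_ne_top h2⟩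
    rw [hM1top, ENNReal.top_mul hb0'] at cmp1
    exact hfin (top_unique cmp1)
  rcases eq_or_ne M1 ⊤ with h1 | h1
  · -- both first moments infinite ⟹ A = B = 0, contradiction
    have h2 : M2 = ⊤ := h21 h1
    have hAz : A = 0 := by
      have hni : ¬ Integrable (fun v => g v • v) μ := by
        intro hint
        have hfi := hint.hasFiniteIntegral
        rw [hasFiniteIntegral_iff_norm] at hfi
        simp_rw [heqg] at hfi
        rw [← hM1', h1] at hfi
        exact lt_irrefl ⊤ hfi
      rcases smul_eq_zero.mp (hA.trans (integral_undef hni)) with hc | hc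
      · exact absurd hc hapos.ne'
      · exact hc
    have hBz : B = 0 := by
      have hni : ¬ Integrable (fun w => h w • w) μ := by
        intro hint
        have hfi := hint.hasFiniteIntegral
        rw [hasFiniteIntegral_iff_norm] at hfi
        simp_rw [heqh] at hfi
        rw [← hM2', h2] at hfi
        exact lt_irrefl ⊤ hfi
      rcases smul_eq_zero.mp (hB.trans (integral_undef hni)) with hc | hc
      · exact absurd hc hbpos.ne'
      · exact hc
    exact absurd (hAz.trans hBz.symm) hAB
  have h2 : M2 ≠ ⊤ := by
    intro hM2top
    have hfin : N + M1 * ENNReal.ofReal b ≠ ⊤ :=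
      ENNReal.add_ne_top.2 ⟨hNfin, ENNReal.mul_ne_top h1 ENNReal.ofReal_ne_top⟩
    rw [hM2top, ENNReal.mul_top ha0'] at cmp2
    exact hfin (top_unique cmp2)
  -- integrability of the vector moments
  have hgv : Integrable (fun v => g v • v) μ := by
    refine ⟨(hg.smul measurable_id).aestronglyMeasurable, ?_⟩
    rw [hasFiniteIntegral_iff_norm]
    simp_rw [heqg]
    exact lt_top_iff_ne_top.2 h1
  have hhw : Integrable (fun w => h w • w) μ := by
    refine ⟨(hh.smul measurable_id).aestronglyMeasurable, ?_⟩
    rw [hasFiniteIntegral_iff_norm]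
    simp_rw [heqh]
    exact lt_top_iff_ne_top.2 h2
  -- inner product identities
  set e := A - B with he
  have hepos : 0 < ‖e‖ := norm_pos_iff.2 (sub_ne_zero.2 hAB)
  have h4g : (fun v => ⟪e, v⟫ * g v) = fun v => ⟪e, g v • v⟫ := by
    funext v; rw [real_inner_smul_right]; ring
  have h4h : (fun w => ⟪e, w⟫ * h w) = fun w => ⟪e, h w • w⟫ := by
    funext w; rw [real_inner_smul_right]; ring
  have hiv : Integrable (fun v => ⟪e, v⟫ * g v) μ := by
    rw [h4g]; exact hgv.const_inner e
  have hihw : Integrable (fun w => ⟪e, w⟫ * h w) μ := by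
    rw [h4h]; exact hhw.const_inner e
  have hIv : (∫ v, ⟪e, v⟫ * g v ∂μ) = a * ⟪e, A⟫ := by
    rw [h4g, integral_inner hgv e, ← hA, real_inner_smul_right]
  have hIw : (∫ w, ⟪e, w⟫ * h w ∂μ) = b * ⟪e, B⟫ := by
    rw [h4h, integral_inner hhw e, ← hB, real_inner_smul_right]
  have hval : ∀ v : E, (∫ w, ⟪e, v - w⟫ * (g v * h w) ∂μ) = g v * b * ⟪e, v - B⟫ := by
    intro v
    have h4 : (fun w => ⟪e, v - w⟫ * (g v * h w))
        = fun w => g v * (⟪e, v⟫ * h w - ⟪e, w⟫ * h w) := by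
      funext w; rw [inner_sub_right]; ring
    rw [h4, integral_const_mul, integral_sub (hhi.const_mul _) hihw, integral_const_mul,
      ← hb', hIw, inner_sub_right]
    ring
  have h4o : (fun v => g v * b * ⟪e, v - B⟫)
      = fun v => b * (⟪e, v⟫ * g v) - (b * ⟪e, B⟫) * g v := by
    funext v; rw [inner_sub_right]; ring
  have hI : (∫ v, g v * b * ⟪e, v - B⟫ ∂μ) = ‖e‖ ^ 2 * a * b := by
    rw [h4o, integral_sub (hiv.const_mul b) (hgi.const_mul _), integral_const_mul, hIv,
      integral_const_mul, ← ha']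
    have h5 : ⟪e, A⟫ - ⟪e, B⟫ = ‖e‖ ^ 2 := by
      rw [← inner_sub_right, ← he, real_inner_self_eq_norm_sq]
    linear_combination a * b * h5
  -- main chain
  have hnn : ∀ v w : E, 0 ≤ g v * h w := fun v w => mul_nonneg (hg0 v) (hh0 w)
  set J := ∫⁻ v, ∫⁻ w, ENNReal.ofReal (‖e‖ * ‖v - w‖ * (g v * h w)) ∂μ ∂μ with hJ'
  have step1 : ENNReal.ofReal (‖e‖ ^ 2 * a * b) ≤ J := by
    calc ENNReal.ofReal (‖e‖ ^ 2 * a * b)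
        = ENNReal.ofReal (∫ v, g v * b * ⟪e, v - B⟫ ∂μ) := by rw [hI]
      _ ≤ ∫⁻ v, ENNReal.ofReal (g v * b * ⟪e, v - B⟫) ∂μ := ofReal_int_le _ _
      _ ≤ ∫⁻ v, ∫⁻ w, ENNReal.ofReal (⟪e, v - w⟫ * (g v * h w)) ∂μ ∂μ := by
          refine lintegral_mono fun v => ?_
          rw [← hval v]
          exact ofReal_int_le _ _
      _ ≤ J := by
          refine lintegral_mono fun v => lintegral_mono fun w => ENNReal.ofReal_le_ofReal ?_
          exact mul_le_mul_of_nonneg_right (real_inner_le_norm e (v - w)) (hnn v w)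
  -- Hölder on the product measure
  set s : E × E → ℝ := fun p => Real.sqrt (g p.1 * h p.2) with hs'
  have hs0 : ∀ p : E × E, 0 ≤ s p := fun p => Real.sqrt_nonneg _
  have hss : ∀ p : E × E, s p * s p = g p.1 * h p.2 := fun p => Real.mul_self_sqrt (hnn p.1 p.2)
  have ms : Measurable s := Real.continuous_sqrt.measurable.comp mgh
  set F : E × E → ℝ≥0∞ := fun p => ENNReal.ofReal (‖e‖ * s p) with hF'
  set G : E × E → ℝ≥0∞ := fun p => ENNReal.ofReal (‖p.1 - p.2‖ * s p) with hG'
  have mF : Measurable F := (measurable_const.mul ms).ennreal_ofReal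
  have mG : Measurable G := (mnorm.mul ms).ennreal_ofReal
  have hFG : ∀ p : E × E, F p * G p
      = ENNReal.ofReal (‖e‖ * ‖p.1 - p.2‖ * (g p.1 * h p.2)) := by
    intro p
    rw [hF', hG', ← ENNReal.ofReal_mul (mul_nonneg (norm_nonneg e) (hs0 p))]
    congr 1
    calc ‖e‖ * s p * (‖p.1 - p.2‖ * s p) = ‖e‖ * ‖p.1 - p.2‖ * (s p * s p) := by ring
      _ = ‖e‖ * ‖p.1 - p.2‖ * (g p.1 * h p.2) := by rw [hss]
  have hFsq : ∀ p : E × E, F p ^ (2:ℝ)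
      = ENNReal.ofReal (‖e‖ ^ 2 * g p.1) * ENNReal.ofReal (h p.2) := by
    intro p
    rw [hF', ENNReal.ofReal_rpow_of_nonneg (mul_nonneg (norm_nonneg e) (hs0 p)) (by norm_num),
      ← ENNReal.ofReal_mul (mul_nonneg (sq_nonneg _) (hg0 _))]
    congr 1
    have h6 : ((‖e‖ * s p) ^ (2:ℝ)) = (‖e‖ * s p) ^ (2:ℕ) := by
      rw [← Real.rpow_natCast (‖e‖ * s p) 2]; norm_num
    rw [h6]
    calc (‖e‖ * s p) ^ 2 = ‖e‖ ^ 2 * (s p * s p) := by ring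
      _ = ‖e‖ ^ 2 * (g p.1 * h p.2) := by rw [hss]
      _ = ‖e‖ ^ 2 * g p.1 * h p.2 := by ring
  have hGsq : ∀ p : E × E, G p ^ (2:ℝ)
      = ENNReal.ofReal (‖p.1 - p.2‖ ^ 2 * g p.1 * h p.2) := by
    intro p
    rw [hG', ENNReal.ofReal_rpow_of_nonneg
      (mul_nonneg (norm_nonneg _) (hs0 p)) (by norm_num)]
    congr 1
    have h6 : ((‖p.1 - p.2‖ * s p) ^ (2:ℝ)) = (‖p.1 - p.2‖ * s p) ^ (2:ℕ) := by
      rw [← Real.rpow_natCast (‖p.1 - p.2‖ * s p) 2]; norm_num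
    rw [h6]
    calc (‖p.1 - p.2‖ * s p) ^ 2 = ‖p.1 - p.2‖ ^ 2 * (s p * s p) := by ring
      _ = ‖p.1 - p.2‖ ^ 2 * (g p.1 * h p.2) := by rw [hss]
      _ = ‖p.1 - p.2‖ ^ 2 * g p.1 * h p.2 := by ring
  have hold := ENNReal.lintegral_mul_le_Lp_mul_Lq (μ.prod μ)
    (Real.HolderConjugate.two_two : Real.HolderConjugate 2 2) mF.aemeasurable mG.aemeasurable
  have hJprod : J = ∫⁻ p, F p * G p ∂(μ.prod μ) := by
    rw [lintegral_prod (fun p : E × E => F p * G p) (mF.mul mG).aemeasurable]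
    simp_rw [hFG]
    rfl
  have hFsqint : ∫⁻ p, F p ^ (2:ℝ) ∂(μ.prod μ) = ENNReal.ofReal (‖e‖ ^ 2 * a * b) := by
    simp_rw [hFsq]
    rw [lintegral_prod
      (fun p : E × E => ENNReal.ofReal (‖e‖ ^ 2 * g p.1) * ENNReal.ofReal (h p.2))
      (by fun_prop)]
    dsimp only
    rw [hprod (fun v => ENNReal.ofReal (‖e‖ ^ 2 * g v)) (fun w => ENNReal.ofReal (h w))
      (measurable_const.mul hg).ennreal_ofReal hh.ennreal_ofReal, hmh]
    have e2 : ∀ v : E, ENNReal.ofReal (‖e‖ ^ 2 * g v)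
        = ENNReal.ofReal (‖e‖ ^ 2) * ENNReal.ofReal (g v) :=
      fun v => ENNReal.ofReal_mul (sq_nonneg _)
    simp_rw [e2]
    rw [lintegral_const_mul' _ _ ENNReal.ofReal_ne_top, hmg,
      ENNReal.ofReal_mul (mul_nonneg (sq_nonneg _) ha0), ENNReal.ofReal_mul (sq_nonneg _),
      mul_assoc]
  have hGsqint : ∫⁻ p, G p ^ (2:ℝ) ∂(μ.prod μ) = K := by
    simp_rw [hGsq]
    rw [lintegral_prod _ mK.aemeasurable, ← hK']
  have hLK : ENNReal.ofReal (‖e‖ ^ 2 * a * b)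
      ≤ ENNReal.ofReal (‖e‖ ^ 2 * a * b) ^ (1/2:ℝ) * K ^ (1/2:ℝ) := by
    calc ENNReal.ofReal (‖e‖ ^ 2 * a * b) ≤ J := step1
      _ = ∫⁻ p, F p * G p ∂(μ.prod μ) := hJprod
      _ ≤ (∫⁻ p, F p ^ (2:ℝ) ∂(μ.prod μ)) ^ (1/(2:ℝ))
          * (∫⁻ p, G p ^ (2:ℝ) ∂(μ.prod μ)) ^ (1/(2:ℝ)) := hold
      _ = ENNReal.ofReal (‖e‖ ^ 2 * a * b) ^ (1/2:ℝ) * K ^ (1/2:ℝ) := by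
          rw [hFsqint, hGsqint]
  set L := ENNReal.ofReal (‖e‖ ^ 2 * a * b) with hL'
  have hL0 : L ≠ 0 :=
    (ENNReal.ofReal_pos.2 (mul_pos (mul_pos (pow_pos hepos 2) hapos) hbpos)).ne'
  have hLt : L ≠ ⊤ := ENNReal.ofReal_ne_top
  have hK0 : K ≠ 0 := by
    intro h0
    rw [h0, ENNReal.zero_rpow_of_pos (by norm_num), mul_zero] at hLK
    exact hL0 (le_zero_iff.mp hLK)
  have half : ∀ x : ℝ≥0∞, x ≠ 0 → x ≠ ⊤ → x ^ (1/2:ℝ) * x ^ (1/2:ℝ) = x := by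
    intro x h0 ht
    rw [← ENNReal.rpow_add _ _ h0 ht]; norm_num
  have hsq : L * L ≤ L * K := by
    calc L * L ≤ (L ^ (1/2:ℝ) * K ^ (1/2:ℝ)) * (L ^ (1/2:ℝ) * K ^ (1/2:ℝ)) :=
        mul_le_mul' hLK hLK
      _ = (L ^ (1/2:ℝ) * L ^ (1/2:ℝ)) * (K ^ (1/2:ℝ) * K ^ (1/2:ℝ)) := by ring
      _ = L * K := by rw [half L hL0 hLt, half K hK0 hK]
  exact (ENNReal.mul_le_mul_iff_right hL0 hLt).mp hsq

private lemma key_c {E : Type*} [NormedAddCommGroup E] [InnerProductSpace ℝ E]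
    [MeasurableSpace E] [BorelSpace E] [SecondCountableTopology E] [CompleteSpace E]
    (μ : Measure E) [SigmaFinite μ] (g h : E → ℝ)
    (hg : Measurable g) (hg0 : ∀ v, 0 ≤ g v)
    (hh : Measurable h) (hh0 : ∀ v, 0 ≤ h v) (c : ℝ) (hc : 0 ≤ c) (A B : E)
    (hA : (∫ v, g v ∂μ) • A = ∫ v, g v • v ∂μ)
    (hB : (∫ w, h w ∂μ) • B = ∫ w, h w • w ∂μ) :
    ENNReal.ofReal (c * ‖A - B‖ ^ 2 * (∫ v, g v ∂μ) * (∫ w, h w ∂μ)) ≤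
      ∫⁻ v, ∫⁻ w, ENNReal.ofReal (c * ‖v - w‖ ^ 2 * g v * h w) ∂μ ∂μ := by
  have e1 : c * ‖A - B‖ ^ 2 * (∫ v, g v ∂μ) * (∫ w, h w ∂μ)
      = c * (‖A - B‖ ^ 2 * (∫ v, g v ∂μ) * (∫ w, h w ∂μ)) := by ring
  have e2 : ∀ v w : E, ENNReal.ofReal (c * ‖v - w‖ ^ 2 * g v * h w)
      = ENNReal.ofReal c * ENNReal.ofReal (‖v - w‖ ^ 2 * g v * h w) := by
    intro v w
    rw [← ENNReal.ofReal_mul hc]; congr 1; ring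
  simp_rw [e1, e2]
  rw [ENNReal.ofReal_mul hc]
  have inner_eq : ∀ v : E,
      (∫⁻ w, ENNReal.ofReal c * ENNReal.ofReal (‖v - w‖ ^ 2 * g v * h w) ∂μ)
      = ENNReal.ofReal c * ∫⁻ w, ENNReal.ofReal (‖v - w‖ ^ 2 * g v * h w) ∂μ :=
    fun v => lintegral_const_mul' _ _ ENNReal.ofReal_ne_top
  simp_rw [inner_eq]
  rw [lintegral_const_mul' _ _ ENNReal.ofReal_ne_top]
  exact mul_le_mul_right (key0 μ g h hg hg0 hh hh0 A B hA hB) _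

/-- The nonlocal alignment dissipation of the macroscopic velocity is dominated by the
kinetic one: `∫∫ φ(x−y)|u(x)−u(y)|² ρ(x)ρ(y) ≤ ∫∫∫∫ φ(x−y)|v−w|² f(x,v)f(y,w)`,
where `ρ(x) = ∫ f(x,v) dv` and `ρ(x)u(x) = ∫ v f(x,v) dv` a.e. -/
theorem stmt_5 {d : ℕ}
    (f : EuclideanSpace ℝ (Fin d) × EuclideanSpace ℝ (Fin d) → ℝ)
    (φ : EuclideanSpace ℝ (Fin d) → ℝ)
    (u : EuclideanSpace ℝ (Fin d) → EuclideanSpace ℝ (Fin d))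
    (hfm : Measurable f) (hf0 : ∀ p, 0 ≤ f p)
    (hφm : Measurable φ) (hφ0 : ∀ x, 0 ≤ φ x)
    (hum : Measurable u)
    (ρ : EuclideanSpace ℝ (Fin d) → ℝ) (hρ : ρ = fun x => ∫ v, f (x, v))
    (hmom : ∀ᵐ x : EuclideanSpace ℝ (Fin d), ρ x • u x = ∫ v, f (x, v) • v) :
    ∫⁻ x, ∫⁻ y, ENNReal.ofReal (φ (x - y) * ‖u x - u y‖ ^ 2 * ρ x * ρ y) ≤
      ∫⁻ x, ∫⁻ y, ∫⁻ v, ∫⁻ w,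
        ENNReal.ofReal (φ (x - y) * ‖v - w‖ ^ 2 * f (x, v) * f (y, w)) := by
  subst hρ
  refine lintegral_mono_ae ?_
  filter_upwards [hmom] with x hx
  refine lintegral_mono_ae ?_
  filter_upwards [hmom] with y hy
  exact key_c volume (fun v => f (x, v)) (fun w => f (y, w))
    (hfm.comp measurable_prodMk_left) (fun v => hf0 _)
    (hfm.comp measurable_prodMk_left) (fun w => hf0 _)
    (φ (x - y)) (hφ0 _) (u x) (u y) hx hy
end

section
/- Let ρ, ρ̄ : ℝ^d → [0, ∞) be integrable, let ū : ℝ^d → ℝ^d be measurable with ρ̄ū and ρ̄|ū − u|² integrable, and let u : ℝ^d → ℝ^d be bounded by M (sup_x |u(x)| ≤ M) and Lipschitz with constant L. Then for every ψ : ℝ^d → ℝ with sup_x |ψ(x)| ≤ 1 and Lipschitz constant ≤ 1, and for each component i ∈ {1, …, d}, one has |∫_{ℝ^d} ψ(x)(ρ̄(x)ū_i(x) − ρ(x)u_i(x)) dx| ≤ (∫_{ℝ^d} ρ̄ dx)^{1/2} (∫_{ℝ^d} ρ̄ |ū − u|² dx)^{1/2} + (M + L) · d_BL(ρ̄, ρ).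 -/
open MeasureTheory

/-- The bounded Lipschitz distance between two densities on `ℝ^d`:
`d_BL(ρ₁, ρ₂) = sup { |∫ ψ (ρ₁ − ρ₂)| : |ψ| ≤ 1, ψ 1-Lipschitz }`. -/
noncomputable def dBL {d : ℕ} (ρ₁ ρ₂ : EuclideanSpace ℝ (Fin d) → ℝ) : ℝ :=
  ⨆ ψ : {ψ : EuclideanSpace ℝ (Fin d) → ℝ // (∀ x, |ψ x| ≤ 1) ∧ LipschitzWith 1 ψ},
    |∫ x, ψ.1 x * (ρ₁ x - ρ₂ x)|

lemma coord_abs_le_norm {d : ℕ} (w : EuclideanSpace ℝ (Fin d)) (i : Fin d) : |w i| ≤ ‖w‖ := by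
  rw [EuclideanSpace.norm_eq]
  conv_lhs => rw [← Real.sqrt_sq_eq_abs]
  apply Real.sqrt_le_sqrt
  simp only [Real.norm_eq_abs, sq_abs]
  exact Finset.single_le_sum (fun j _ => sq_nonneg (w j)) (Finset.mem_univ i)

/-- Error estimate between moments in bounded Lipschitz distance: for every bounded
1-Lipschitz test function `ψ` and each component `i`,
`|∫ ψ (ρ̄ū_i − ρu_i)| ≤ (∫ρ̄)^{1/2}(∫ρ̄|ū−u|²)^{1/2} + (M + L) d_BL(ρ̄, ρ)`. -/
theorem stmt_7 {d : ℕ} (ρ ρ' : EuclideanSpace ℝ (Fin d) → ℝ)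
    (u u' : EuclideanSpace ℝ (Fin d) → EuclideanSpace ℝ (Fin d)) (M : ℝ) (L : NNReal)
    (hρ0 : ∀ x, 0 ≤ ρ x) (hρ'0 : ∀ x, 0 ≤ ρ' x)
    (hρi : Integrable ρ) (hρ'i : Integrable ρ')
    (hu'm : Measurable u')
    (h1 : Integrable (fun x => ρ' x • u' x))
    (h3 : Integrable (fun x => ρ' x * ‖u' x - u x‖ ^ 2))
    (hM : ∀ x, ‖u x‖ ≤ M) (hL : LipschitzWith L u)
    (ψ : EuclideanSpace ℝ (Fin d) → ℝ) (hψb : ∀ x, |ψ x| ≤ 1) (hψl : LipschitzWith 1 ψ)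
    (i : Fin d) :
    |∫ x, ψ x * (ρ' x * u' x i - ρ x * u x i)| ≤
      Real.sqrt (∫ x, ρ' x) * Real.sqrt (∫ x, ρ' x * ‖u' x - u x‖ ^ 2)
        + (M + L) * dBL ρ' ρ := by
  have hum : Measurable u := hL.continuous.measurable
  have hψm : Measurable ψ := hψl.continuous.measurable
  have huim : Measurable fun x => u x i := (measurable_pi_apply i).comp ((WithLp.measurable_ofLp _ _).comp hum)
  have hu'im : Measurable fun x => u' x i := (measurable_pi_apply i).comp ((WithLp.measurable_ofLp _ _).comp hu'm)
  have hvm : Measurable fun x => ‖u' x - u x‖ := (hu'm.sub hum).norm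
  have hM0 : 0 ≤ M := le_trans (norm_nonneg (u 0)) (hM 0)
  have hcoordu : ∀ x, |u x i| ≤ M := fun x => (coord_abs_le_norm (u x) i).trans (hM x)
  -- integrability of ρ' ‖u' - u‖
  have hgi : Integrable (fun x => ρ' x * ‖u' x - u x‖) := by
    refine Integrable.mono' (hρ'i.add h3)
      (hρ'i.aestronglyMeasurable.mul hvm.aestronglyMeasurable)
      (Filter.Eventually.of_forall fun x => ?_)
    have h1' := hρ'0 x
    have h2' : (0:ℝ) ≤ ‖u' x - u x‖ := norm_nonneg _
    rw [Real.norm_eq_abs, abs_of_nonneg (mul_nonneg h1' h2')]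
    simp only [Pi.add_apply]
    nlinarith [sq_nonneg (‖u' x - u x‖ - 1)]
  -- pointwise bound for the first piece
  have hcoord : ∀ x, |u' x i - u x i| ≤ ‖u' x - u x‖ := by
    intro x
    have := coord_abs_le_norm (u' x - u x) i
    simpa using this
  have hptw : ∀ x, ‖ψ x * ρ' x * (u' x i - u x i)‖ ≤ ρ' x * ‖u' x - u x‖ := by
    intro x
    rw [Real.norm_eq_abs, abs_mul, abs_mul, abs_of_nonneg (hρ'0 x)]
    have ha : |ψ x| * ρ' x ≤ ρ' x := mul_le_of_le_one_left (hρ'0 x) (hψb x)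
    exact mul_le_mul ha (hcoord x) (abs_nonneg _) (hρ'0 x)
  have hf1i : Integrable (fun x => ψ x * ρ' x * (u' x i - u x i)) :=
    Integrable.mono' hgi
      ((hψm.aestronglyMeasurable.mul hρ'i.aestronglyMeasurable).mul
        (hu'im.sub huim).aestronglyMeasurable)
      (Filter.Eventually.of_forall hptw)
  have hptw2 : ∀ x, ‖ψ x * u x i * (ρ' x - ρ x)‖ ≤ M * (|ρ' x| + |ρ x|) := by
    intro x
    rw [Real.norm_eq_abs, abs_mul, abs_mul]
    have ha : |ψ x| * |u x i| ≤ M := by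
      have := mul_le_mul (hψb x) (hcoordu x) (abs_nonneg _) zero_le_one
      linarith
    refine mul_le_mul ha (abs_sub _ _) (abs_nonneg _) hM0
  have hf2i : Integrable (fun x => ψ x * u x i * (ρ' x - ρ x)) :=
    Integrable.mono' ((hρ'i.abs.add hρi.abs).const_mul M)
      ((hψm.mul huim).aestronglyMeasurable.mul (hρ'i.sub hρi).aestronglyMeasurable)
      (Filter.Eventually.of_forall hptw2)
  -- split the integral
  have hsplit : ∫ x, ψ x * (ρ' x * u' x i - ρ x * u x i)
      = (∫ x, ψ x * ρ' x * (u' x i - u x i)) + ∫ x, ψ x * u x i * (ρ' x - ρ x) := by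
    rw [← integral_add hf1i hf2i]
    exact integral_congr_ae (Filter.Eventually.of_forall fun x => by ring)
  rw [hsplit]
  refine (abs_add_le _ _).trans (add_le_add ?_ ?_)
  · -- Cauchy–Schwarz part
    have hb1 : |∫ x, ψ x * ρ' x * (u' x i - u x i)| ≤ ∫ x, ρ' x * ‖u' x - u x‖ := by
      rw [← Real.norm_eq_abs]
      exact norm_integral_le_of_norm_le hgi (Filter.Eventually.of_forall hptw)
    refine hb1.trans ?_
    set f : EuclideanSpace ℝ (Fin d) → ℝ := fun x => Real.sqrt (ρ' x) with hf
    set g : EuclideanSpace ℝ (Fin d) → ℝ := fun x => Real.sqrt (ρ' x) * ‖u' x - u x‖ with hg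
    have hfm : AEStronglyMeasurable f volume :=
      (Real.continuous_sqrt.measurable.comp_aemeasurable
        hρ'i.aestronglyMeasurable.aemeasurable).aestronglyMeasurable
    have hgm : AEStronglyMeasurable g volume := hfm.mul hvm.aestronglyMeasurable
    have hf2 : (fun x => f x ^ (2:ℕ)) = ρ' := by
      funext x; simp only [hf]; rw [Real.sq_sqrt (hρ'0 x)]
    have hg2 : (fun x => g x ^ (2:ℕ)) = fun x => ρ' x * ‖u' x - u x‖ ^ 2 := by
      funext x; simp only [hg]; rw [mul_pow, Real.sq_sqrt (hρ'0 x)]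
    have hfmem : MemLp f (ENNReal.ofReal 2) volume := by
      rw [show ENNReal.ofReal 2 = 2 by norm_num]
      rw [memLp_two_iff_integrable_sq hfm, hf2]
      exact hρ'i
    have hgmem : MemLp g (ENNReal.ofReal 2) volume := by
      rw [show ENNReal.ofReal 2 = 2 by norm_num]
      rw [memLp_two_iff_integrable_sq hgm, hg2]
      exact h3
    have hpq : (2:ℝ).HolderConjugate 2 := by
      constructor <;> norm_num
    have hH := integral_mul_le_Lp_mul_Lq_of_nonneg hpq
      (Filter.Eventually.of_forall fun x => Real.sqrt_nonneg _)
      (Filter.Eventually.of_forall fun x => mul_nonneg (Real.sqrt_nonneg _) (norm_nonneg _))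
      hfmem hgmem
    have heq : ∫ x, ρ' x * ‖u' x - u x‖ = ∫ x, f x * g x := by
      refine integral_congr_ae (Filter.Eventually.of_forall fun x => ?_)
      simp only [hf, hg]
      rw [← mul_assoc, Real.mul_self_sqrt (hρ'0 x)]
    rw [heq]
    refine hH.trans_eq ?_
    have e1 : ∫ x, f x ^ (2:ℝ) = ∫ x, ρ' x := by
      refine integral_congr_ae (Filter.Eventually.of_forall fun x => ?_)
      simp only [hf]
      rw [Real.rpow_two, Real.sq_sqrt (hρ'0 x)]
    have e2 : ∫ x, g x ^ (2:ℝ) = ∫ x, ρ' x * ‖u' x - u x‖ ^ 2 := by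
      refine integral_congr_ae (Filter.Eventually.of_forall fun x => ?_)
      simp only [hg]
      rw [Real.rpow_two, mul_pow, Real.sq_sqrt (hρ'0 x)]
    rw [e1, e2, Real.sqrt_eq_rpow, Real.sqrt_eq_rpow]
  · -- bounded-Lipschitz part
    rcases eq_or_lt_of_le (by positivity : (0:ℝ) ≤ M + L) with hML | hML
    · -- M + L = 0 : u ≡ 0
      have hMz : M = 0 := by
        have := L.coe_nonneg; linarith
      have hu0 : ∀ x, u x = 0 := fun x =>
        norm_le_zero_iff.mp (by rw [← hMz]; exact hM x)
      have : ∀ x, ψ x * u x i * (ρ' x - ρ x) = 0 := by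
        intro x; rw [hu0 x]; simp
      rw [← hML]
      simp only [this, integral_zero, abs_zero, zero_mul, le_refl]
    · -- M + L > 0 : normalize the test function
      set φ : EuclideanSpace ℝ (Fin d) → ℝ := fun x => ψ x * u x i / (M + L) with hφ
      have hφb : ∀ x, |φ x| ≤ 1 := by
        intro x
        rw [hφ, abs_div, abs_of_pos hML, div_le_one hML, abs_mul]
        calc |ψ x| * |u x i| ≤ 1 * M :=
              mul_le_mul (hψb x) (hcoordu x) (abs_nonneg _) zero_le_one
          _ ≤ M + L := by have := L.coe_nonneg; linarith
      have hφl : LipschitzWith 1 φ := by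
        apply LipschitzWith.of_dist_le_mul
        intro x y
        rw [NNReal.coe_one, one_mul, Real.dist_eq, hφ]
        rw [div_sub_div_same, abs_div, abs_of_pos hML, div_le_iff₀ hML]
        have hkey : ψ x * u x i - ψ y * u y i
            = ψ x * (u x i - u y i) + (ψ x - ψ y) * u y i := by ring
        rw [hkey]
        have hb1 : |ψ x * (u x i - u y i)| ≤ 1 * (L * dist x y) := by
          rw [abs_mul]
          refine mul_le_mul (hψb x) ?_ (abs_nonneg _) zero_le_one
          calc |u x i - u y i| ≤ ‖u x - u y‖ := by
                have := coord_abs_le_norm (u x - u y) i; simpa using this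
            _ = dist (u x) (u y) := (dist_eq_norm _ _).symm
            _ ≤ L * dist x y := hL.dist_le_mul x y
        have hb2 : |(ψ x - ψ y) * u y i| ≤ dist x y * M := by
          rw [abs_mul]
          refine mul_le_mul ?_ (hcoordu y) (abs_nonneg _) dist_nonneg
          calc |ψ x - ψ y| = dist (ψ x) (ψ y) := (Real.dist_eq _ _).symm
            _ ≤ 1 * dist x y := hψl.dist_le_mul x y
            _ = dist x y := one_mul _
        calc |ψ x * (u x i - u y i) + (ψ x - ψ y) * u y i|
            ≤ |ψ x * (u x i - u y i)| + |(ψ x - ψ y) * u y i| := abs_add_le _ _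
          _ ≤ 1 * (L * dist x y) + dist x y * M := add_le_add hb1 hb2
          _ = dist x y * (M + L) := by ring
      have hbdd : BddAbove (Set.range fun χ :
          {χ : EuclideanSpace ℝ (Fin d) → ℝ // (∀ x, |χ x| ≤ 1) ∧ LipschitzWith 1 χ} =>
          |∫ x, χ.1 x * (ρ' x - ρ x)|) := by
        refine ⟨∫ x, (|ρ' x| + |ρ x|), ?_⟩
        rintro r ⟨⟨χ, hχb, hχl⟩, rfl⟩
        dsimp only
        rw [← Real.norm_eq_abs]
        refine norm_integral_le_of_norm_le (hρ'i.abs.add hρi.abs)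
          (Filter.Eventually.of_forall fun x => ?_)
        rw [Real.norm_eq_abs, abs_mul]
        calc |χ x| * |ρ' x - ρ x| ≤ 1 * (|ρ' x| + |ρ x|) :=
              mul_le_mul (hχb x) (abs_sub _ _) (abs_nonneg _) zero_le_one
          _ = |ρ' x| + |ρ x| := one_mul _
      have hdBL : |∫ x, φ x * (ρ' x - ρ x)| ≤ dBL ρ' ρ := by
        have h := le_ciSup hbdd (⟨φ, hφb, hφl⟩ :
          {χ : EuclideanSpace ℝ (Fin d) → ℝ // (∀ x, |χ x| ≤ 1) ∧ LipschitzWith 1 χ})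
        simpa [dBL] using h
      have hrel : ∫ x, ψ x * u x i * (ρ' x - ρ x) = (M + L) * ∫ x, φ x * (ρ' x - ρ x) := by
        rw [← integral_const_mul]
        refine integral_congr_ae (Filter.Eventually.of_forall fun x => ?_)
        rw [hφ]
        field_simp
      rw [hrel, abs_mul, abs_of_pos hML]
      exact mul_le_mul_of_nonneg_left hdBL hML.le
end

section
/- Let ρ, ρ̄ : ℝ^d → [0, ∞) be integrable, let u, ū : ℝ^d → ℝ^d be measurable with u bounded (sup_x |u(x)| =: ‖u‖_∞ < ∞), and assume ρ̄|ū|², ρ̄|ū − u|², and |ρ̄ − ρ| are integrable. Then, measuring d×d matrices in the Frobenius norm, ∫_{ℝ^d} ‖ρ̄(x)ū(x) ⊗ ū(x) − ρ(x)u(x) ⊗ u(x)‖ dx ≤ ∫_{ℝ^d} ρ̄ |ū − u|² dx + 2‖u‖_∞ (∫_{ℝ^d} ρ̄ dx)^{1/2} (∫_{ℝ^d} ρ̄ |ū − u|² dx)^{1/2} + 3‖u‖_∞² ∫_{ℝ^d} |ρ̄ − ρ| dx. -/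
open MeasureTheory

noncomputable def tens {d : ℕ} (a b : EuclideanSpace ℝ (Fin d)) :
    EuclideanSpace ℝ (Fin d × Fin d) :=
  (WithLp.equiv 2 _).symm fun p => a p.1 * b p.2

theorem tens_norm {d : ℕ} (a b : EuclideanSpace ℝ (Fin d)) :
    ‖tens a b‖ = ‖a‖ * ‖b‖ := by
  simp only [EuclideanSpace.norm_eq, tens, WithLp.equiv_symm_apply, PiLp.toLp_apply]
  rw [← Real.sqrt_mul (by positivity)]
  congr 1
  rw [Fintype.sum_prod_type, Finset.sum_mul_sum]
  simp [Real.norm_eq_abs, sq_abs, mul_pow]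

theorem ptwise {d : ℕ} (r r' M : ℝ) (a b : EuclideanSpace ℝ (Fin d))
    (hr' : 0 ≤ r') (hMa : ‖a‖ ≤ M) :
    Real.sqrt (∑ i, ∑ j, (r' * b i * b j - r * a i * a j) ^ 2)
      ≤ r' * ‖b - a‖ ^ 2 + 2 * M * (r' * ‖b - a‖) + M ^ 2 * |r' - r| := by
  have hM0 : 0 ≤ M := le_trans (norm_nonneg a) hMa
  set v : EuclideanSpace ℝ (Fin d) := b - a with hv
  have hLHS : Real.sqrt (∑ i, ∑ j, (r' * b i * b j - r * a i * a j) ^ 2)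
      = ‖((WithLp.equiv 2 _).symm fun p : Fin d × Fin d =>
          r' * b p.1 * b p.2 - r * a p.1 * a p.2 : EuclideanSpace ℝ (Fin d × Fin d))‖ := by
    rw [EuclideanSpace.norm_eq, Fintype.sum_prod_type]
    simp [Real.norm_eq_abs, sq_abs]
  have hdecomp : ((WithLp.equiv 2 _).symm fun p : Fin d × Fin d =>
          r' * b p.1 * b p.2 - r * a p.1 * a p.2 : EuclideanSpace ℝ (Fin d × Fin d))
      = r' • tens v v + r' • tens v a + r' • tens a v + (r' - r) • tens a a := by
    ext p
    simp only [tens, WithLp.equiv_symm_apply, PiLp.toLp_apply, PiLp.add_apply, PiLp.smul_apply,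
      smul_eq_mul, hv, PiLp.sub_apply]
    ring
  rw [hLHS, hdecomp]
  have h1 := norm_add_le (r' • tens v v + r' • tens v a + r' • tens a v) ((r' - r) • tens a a)
  have h2 := norm_add_le (r' • tens v v + r' • tens v a) (r' • tens a v)
  have h3 := norm_add_le (r' • tens v v) (r' • tens v a)
  simp only [norm_smul, Real.norm_eq_abs, tens_norm, abs_of_nonneg hr'] at h1 h2 h3
  have hva : ‖v‖ * ‖a‖ ≤ M * ‖v‖ := by nlinarith [norm_nonneg v]
  have hva' : ‖a‖ * ‖v‖ ≤ M * ‖v‖ := by rw [mul_comm]; exact hva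
  have hAA : ‖a‖ * ‖a‖ ≤ M * M := mul_le_mul hMa hMa (norm_nonneg a) hM0
  nlinarith [norm_nonneg v, norm_nonneg a, abs_nonneg (r' - r),
    mul_le_mul_of_nonneg_left hva hr', mul_le_mul_of_nonneg_left hva' hr',
    mul_le_mul_of_nonneg_left hAA (abs_nonneg (r' - r))]

/-- Error estimate between convection terms, measuring `d×d` matrices in the Frobenius
norm `√(∑_{i,j} a_{ij}²)`:
`∫ ‖ρ̄ū⊗ū − ρu⊗u‖_F ≤ ∫ρ̄|ū−u|² + 2‖u‖_∞ (∫ρ̄)^{1/2}(∫ρ̄|ū−u|²)^{1/2} + 3‖u‖_∞² ∫|ρ̄−ρ|`. -/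
theorem stmt_8 {d : ℕ} (ρ ρ' : EuclideanSpace ℝ (Fin d) → ℝ)
    (u u' : EuclideanSpace ℝ (Fin d) → EuclideanSpace ℝ (Fin d)) (M : ℝ)
    (hρ0 : ∀ x, 0 ≤ ρ x) (hρ'0 : ∀ x, 0 ≤ ρ' x)
    (hρi : Integrable ρ) (hρ'i : Integrable ρ')
    (hum : Measurable u) (hu'm : Measurable u')
    (hM : ∀ x, ‖u x‖ ≤ M)
    (h1 : Integrable (fun x => ρ' x * ‖u' x‖ ^ 2))
    (h3 : Integrable (fun x => ρ' x * ‖u' x - u x‖ ^ 2)) :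
    ∫ x, Real.sqrt (∑ i, ∑ j,
        (ρ' x * u' x i * u' x j - ρ x * u x i * u x j) ^ 2) ≤
      (∫ x, ρ' x * ‖u' x - u x‖ ^ 2)
        + 2 * M * Real.sqrt (∫ x, ρ' x) * Real.sqrt (∫ x, ρ' x * ‖u' x - u x‖ ^ 2)
        + 3 * M ^ 2 * ∫ x, |ρ' x - ρ x| := by
  have hM0 : 0 ≤ M := le_trans (norm_nonneg (u 0)) (hM 0)
  have hvm : Measurable (fun x => u' x - u x) := hu'm.sub hum
  have hρ'm : AEMeasurable ρ' := hρ'i.aemeasurable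
  have hg2m : AEStronglyMeasurable (fun x => ρ' x * ‖u' x - u x‖) volume :=
    (hρ'm.mul hvm.norm.aemeasurable).aestronglyMeasurable
  have hg2i : Integrable (fun x => ρ' x * ‖u' x - u x‖) := by
    refine Integrable.mono' ((hρ'i.add h3).div_const 2) hg2m (ae_of_all _ fun x => ?_)
    have h0 := hρ'0 x
    have hn := norm_nonneg (u' x - u x)
    rw [Real.norm_eq_abs, abs_of_nonneg (by positivity)]
    simp only [Pi.add_apply]
    nlinarith [sq_nonneg (‖u' x - u x‖ - 1)]
  have hg3i : Integrable (fun x => |ρ' x - ρ x|) := (hρ'i.sub hρi).abs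
  -- Cauchy–Schwarz
  have hCS : ∫ x, ρ' x * ‖u' x - u x‖
      ≤ Real.sqrt (∫ x, ρ' x) * Real.sqrt (∫ x, ρ' x * ‖u' x - u x‖ ^ 2) := by
    have hpq : Real.HolderConjugate 2 2 := Real.holderConjugate_iff.mpr ⟨one_lt_two, by norm_num⟩
    have hsm : AEStronglyMeasurable (fun x => Real.sqrt (ρ' x)) volume :=
      Real.continuous_sqrt.comp_aestronglyMeasurable hρ'i.aestronglyMeasurable
    have hgm : AEStronglyMeasurable (fun x => Real.sqrt (ρ' x) * ‖u' x - u x‖) volume :=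
      hsm.mul hvm.norm.aestronglyMeasurable
    have hf2 : MemLp (fun x => Real.sqrt (ρ' x)) (ENNReal.ofReal 2) := by
      rw [show ENNReal.ofReal 2 = 2 by norm_num, memLp_two_iff_integrable_sq hsm]
      exact hρ'i.congr (ae_of_all _ fun x => (Real.sq_sqrt (hρ'0 x)).symm)
    have hg2 : MemLp (fun x => Real.sqrt (ρ' x) * ‖u' x - u x‖) (ENNReal.ofReal 2) := by
      rw [show ENNReal.ofReal 2 = 2 by norm_num, memLp_two_iff_integrable_sq hgm]
      refine h3.congr (ae_of_all _ fun x => ?_)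
      show ρ' x * ‖u' x - u x‖ ^ 2 = (Real.sqrt (ρ' x) * ‖u' x - u x‖) ^ 2
      rw [mul_pow, Real.sq_sqrt (hρ'0 x)]
    have key := integral_mul_le_Lp_mul_Lq_of_nonneg hpq
      (ae_of_all _ fun x => Real.sqrt_nonneg _)
      (ae_of_all _ fun x => by positivity) hf2 hg2
    have eL : ∫ x, Real.sqrt (ρ' x) * (Real.sqrt (ρ' x) * ‖u' x - u x‖)
        = ∫ x, ρ' x * ‖u' x - u x‖ := by
      congr 1; funext x; rw [← mul_assoc, Real.mul_self_sqrt (hρ'0 x)]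
    have eF : ∫ x, Real.sqrt (ρ' x) ^ (2 : ℝ) = ∫ x, ρ' x := by
      congr 1; funext x; rw [Real.rpow_two, Real.sq_sqrt (hρ'0 x)]
    have eG : ∫ x, (Real.sqrt (ρ' x) * ‖u' x - u x‖) ^ (2 : ℝ)
        = ∫ x, ρ' x * ‖u' x - u x‖ ^ 2 := by
      congr 1; funext x; rw [Real.rpow_two, mul_pow, Real.sq_sqrt (hρ'0 x)]
    rw [eL, eF, eG, ← Real.sqrt_eq_rpow, ← Real.sqrt_eq_rpow] at key
    exact key
  have hg2i' : Integrable (fun x => 2 * M * (ρ' x * ‖u' x - u x‖)) := hg2i.const_mul _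
  have hg3i' : Integrable (fun x => M ^ 2 * |ρ' x - ρ x|) := hg3i.const_mul _
  have hfg : Integrable (fun x => ρ' x * ‖u' x - u x‖ ^ 2
      + 2 * M * (ρ' x * ‖u' x - u x‖)) := h3.add hg2i'
  calc ∫ x, Real.sqrt (∑ i, ∑ j,
        (ρ' x * u' x i * u' x j - ρ x * u x i * u x j) ^ 2)
      ≤ ∫ x, (ρ' x * ‖u' x - u x‖ ^ 2 + 2 * M * (ρ' x * ‖u' x - u x‖)
          + M ^ 2 * |ρ' x - ρ x|) := by
        refine integral_mono_of_nonneg (ae_of_all _ fun x => Real.sqrt_nonneg _)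
          (hfg.add hg3i') (ae_of_all _ fun x => ?_)
        exact ptwise (ρ x) (ρ' x) M (u x) (u' x) (hρ'0 x) (hM x)
    _ = (∫ x, ρ' x * ‖u' x - u x‖ ^ 2) + 2 * M * (∫ x, ρ' x * ‖u' x - u x‖)
          + M ^ 2 * ∫ x, |ρ' x - ρ x| := by
        rw [integral_add hfg hg3i', integral_add h3 hg2i',
          integral_const_mul, integral_const_mul]
    _ ≤ (∫ x, ρ' x * ‖u' x - u x‖ ^ 2)
        + 2 * M * Real.sqrt (∫ x, ρ' x) * Real.sqrt (∫ x, ρ' x * ‖u' x - u x‖ ^ 2)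
        + 3 * M ^ 2 * ∫ x, |ρ' x - ρ x| := by
        have h2M : 2 * M * (∫ x, ρ' x * ‖u' x - u x‖)
            ≤ 2 * M * (Real.sqrt (∫ x, ρ' x) * Real.sqrt (∫ x, ρ' x * ‖u' x - u x‖ ^ 2)) :=
          mul_le_mul_of_nonneg_left hCS (by positivity)
        have h3M : M ^ 2 * (∫ x, |ρ' x - ρ x|) ≤ 3 * M ^ 2 * ∫ x, |ρ' x - ρ x| := by
          have hnn : 0 ≤ ∫ x, |ρ' x - ρ x| :=
            integral_nonneg (fun x => abs_nonneg (ρ' x - ρ x))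
          nlinarith [sq_nonneg M]
        nlinarith [h2M, h3M]
end

section
/- Let f : ℝ^d × ℝ^d → [0, ∞) be integrable with ∫∫ |v|² f(x, v) dx dv < ∞; set ρ̄(x) := ∫ f(x, v) dv and let ū : ℝ^d → ℝ^d be measurable with ρ̄(x)ū(x) = ∫ v f(x, v) dv for a.e. x. Let ρ : ℝ^d → [0, ∞) be integrable, and let u : ℝ^d → ℝ^d be bounded and Lipschitz with constant L. Assume ρ̄|ū − u|² is integrable. Then for every φ : ℝ^d × ℝ^d → ℝ with sup |φ| ≤ 1 and Lipschitz constant ≤ 1 (with respect to the Euclidean metric on ℝ^d × ℝ^d): |∫∫ φ(x, v) f(x, v) dx dv − ∫ φ(x, u(x)) ρ(x) dx| ≤ (∫ ρ̄ dx)^{1/2} [ (∫∫ |v − ū(x)|² f(x, v) dx dv)^{1/2} + (∫ ρ̄ |ū − u|² dx)^{1/2} ] + (1 + L) · d_BL(ρ̄, ρ). (This quantifies the distance of a kinetic density f to the monokinetic ansatz ρ(x) ⊗ δ_{u(x)}(v) in bounded Lipschitz distance.) -/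
open MeasureTheory

/-- `|∫ h| ≤ ∫ |h|` for real integrals. -/
lemma abs_int_le_int_abs {α : Type*} [MeasurableSpace α] {μ : Measure α} (h : α → ℝ) :
    |∫ x, h x ∂μ| ≤ ∫ x, |h x| ∂μ := by
  simpa [Real.norm_eq_abs] using norm_integral_le_integral_norm (μ := μ) h

/-- `√(a² + b²) ≤ a + b` for nonnegative `a, b`. -/
lemma sqrt_sq_add_sq_le {a b : ℝ} (ha : 0 ≤ a) (hb : 0 ≤ b) :
    Real.sqrt (a ^ 2 + b ^ 2) ≤ a + b := by
  have h := Real.sqrt_le_sqrt (show a ^ 2 + b ^ 2 ≤ (a + b) ^ 2 by nlinarith)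
  rwa [Real.sqrt_sq (by positivity)] at h

/-- Cauchy–Schwarz for a nonnegative weight against a nonnegative density. -/
lemma cs_weighted {α : Type*} [MeasurableSpace α] {μ : Measure α} {w f : α → ℝ}
    (hw : ∀ x, 0 ≤ w x) (hf0 : ∀ x, 0 ≤ f x)
    (hf : Integrable f μ) (hwf : Integrable (fun x => w x * f x) μ)
    (hw2f : Integrable (fun x => w x ^ 2 * f x) μ) :
    ∫ x, w x * f x ∂μ ≤ Real.sqrt (∫ x, f x ∂μ) * Real.sqrt (∫ x, w x ^ 2 * f x ∂μ) := by
  set A := ∫ x, f x ∂μ with hA'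
  set B := ∫ x, w x ^ 2 * f x ∂μ with hB'
  set C := ∫ x, w x * f x ∂μ with hC'
  have hA : 0 ≤ A := integral_nonneg hf0
  have hB : 0 ≤ B := integral_nonneg fun x => mul_nonneg (sq_nonneg _) (hf0 x)
  have hC : 0 ≤ C := integral_nonneg fun x => mul_nonneg (hw x) (hf0 x)
  have key : ∀ t : ℝ, 0 ≤ A * (t * t) + (2 * C) * t + B := by
    intro t
    have i1 : Integrable (fun x => (t * t) * f x) μ := hf.const_mul _
    have i2 : Integrable (fun x => (2 * t) * (w x * f x)) μ := hwf.const_mul _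
    have e1 : ∫ x, ((t * t) * f x + (2 * t) * (w x * f x) + w x ^ 2 * f x) ∂μ
        = (∫ x, ((t * t) * f x + (2 * t) * (w x * f x)) ∂μ) + B :=
      integral_add (i1.add i2) hw2f
    have e2 : ∫ x, ((t * t) * f x + (2 * t) * (w x * f x)) ∂μ
        = (∫ x, (t * t) * f x ∂μ) + ∫ x, (2 * t) * (w x * f x) ∂μ := integral_add i1 i2
    have e3 : ∫ x, (t * t) * f x ∂μ = (t * t) * A := integral_const_mul _ _
    have e4 : ∫ x, (2 * t) * (w x * f x) ∂μ = (2 * t) * C := integral_const_mul _ _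
    have heq : A * (t * t) + (2 * C) * t + B
        = ∫ x, ((t * t) * f x + (2 * t) * (w x * f x) + w x ^ 2 * f x) ∂μ := by
      rw [e1, e2, e3, e4]; ring
    rw [heq]
    refine integral_nonneg fun x => ?_
    have hx : (t * t) * f x + (2 * t) * (w x * f x) + w x ^ 2 * f x
        = (t + w x) ^ 2 * f x := by ring
    rw [hx]
    exact mul_nonneg (sq_nonneg _) (hf0 x)
  have hd : discrim A (2 * C) B ≤ 0 := discrim_le_zero key
  rw [discrim] at hd
  have h2 : C ^ 2 ≤ A * B := by nlinarith
  calc C = Real.sqrt (C ^ 2) := (Real.sqrt_sq hC).symm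
    _ ≤ Real.sqrt (A * B) := Real.sqrt_le_sqrt h2
    _ = Real.sqrt A * Real.sqrt B := Real.sqrt_mul hA B

/-- Quantitative distance of a kinetic density `f(x,v)` to the monokinetic ansatz
`ρ(x) ⊗ δ_{u(x)}(v)` tested against bounded functions `φ` that are 1-Lipschitz for the
Euclidean metric on `ℝ^d × ℝ^d`. -/
theorem stmt_10 {d : ℕ}
    (f : EuclideanSpace ℝ (Fin d) × EuclideanSpace ℝ (Fin d) → ℝ)
    (hfm : Measurable f) (hf0 : ∀ p, 0 ≤ f p) (hfi : Integrable f)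
    (hmom2 : Integrable (fun p : EuclideanSpace ℝ (Fin d) × EuclideanSpace ℝ (Fin d) =>
      ‖p.2‖ ^ 2 * f p))
    (ρ' : EuclideanSpace ℝ (Fin d) → ℝ) (hρ' : ρ' = fun x => ∫ v, f (x, v))
    (u' : EuclideanSpace ℝ (Fin d) → EuclideanSpace ℝ (Fin d)) (hu'm : Measurable u')
    (hu' : ∀ᵐ x : EuclideanSpace ℝ (Fin d), ρ' x • u' x = ∫ v, f (x, v) • v)
    (ρ : EuclideanSpace ℝ (Fin d) → ℝ) (hρ0 : ∀ x, 0 ≤ ρ x) (hρi : Integrable ρ)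
    (u : EuclideanSpace ℝ (Fin d) → EuclideanSpace ℝ (Fin d))
    (M : ℝ) (hM : ∀ x, ‖u x‖ ≤ M) (L : NNReal) (hL : LipschitzWith L u)
    (h3 : Integrable (fun x => ρ' x * ‖u' x - u x‖ ^ 2))
    (φ : EuclideanSpace ℝ (Fin d) × EuclideanSpace ℝ (Fin d) → ℝ)
    (hφb : ∀ p, |φ p| ≤ 1)
    (hφl : ∀ p q : EuclideanSpace ℝ (Fin d) × EuclideanSpace ℝ (Fin d),
      |φ p - φ q| ≤ Real.sqrt (‖p.1 - q.1‖ ^ 2 + ‖p.2 - q.2‖ ^ 2)) :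
    |(∫ p, φ p * f p) - ∫ x, φ (x, u x) * ρ x| ≤
      Real.sqrt (∫ x, ρ' x) *
        (Real.sqrt (∫ p, ‖p.2 - u' p.1‖ ^ 2 * f p)
          + Real.sqrt (∫ x, ρ' x * ‖u' x - u x‖ ^ 2))
        + (1 + (L : ℝ)) * dBL ρ' ρ := by
  classical
  -- φ satisfies an additive Lipschitz bound
  have hφ' : ∀ p q : EuclideanSpace ℝ (Fin d) × EuclideanSpace ℝ (Fin d),
      |φ p - φ q| ≤ ‖p.1 - q.1‖ + ‖p.2 - q.2‖ := fun p q =>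
    (hφl p q).trans (sqrt_sq_add_sq_le (norm_nonneg _) (norm_nonneg _))
  have hφc : Continuous φ := by
    have h2L : LipschitzWith 2 φ := by
      refine LipschitzWith.of_dist_le_mul fun p q => ?_
      rw [Real.dist_eq]
      refine (hφ' p q).trans ?_
      have h1 : ‖p.1 - q.1‖ ≤ dist p q := by
        rw [← dist_eq_norm, Prod.dist_eq]; exact le_max_left _ _
      have h2 : ‖p.2 - q.2‖ ≤ dist p q := by
        rw [← dist_eq_norm, Prod.dist_eq]; exact le_max_right _ _
      push_cast
      linarith
    exact h2L.continuous
  have huc : Continuous u := hL.continuous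
  -- basic facts about ρ'
  have hρ'x : ∀ x, ρ' x = ∫ v, f (x, v) := fun x => by rw [hρ']
  have hρ'0 : ∀ x, 0 ≤ ρ' x := fun x => by
    rw [hρ'x]; exact integral_nonneg fun v => hf0 _
  have hfi' : Integrable f
      ((volume : Measure (EuclideanSpace ℝ (Fin d))).prod volume) := hfi
  have hρ'i : Integrable ρ' := by
    rw [hρ']; exact hfi'.integral_prod_left
  have hAeq : ∫ p, f p = ∫ x, ρ' x := by
    rw [Measure.volume_eq_prod, integral_prod f hfi']
    exact integral_congr_ae (Filter.Eventually.of_forall fun x => (hρ'x x).symm)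
  -- the weight w p = ‖p.2 - u' p.1‖ and c x = ‖u' x - u x‖
  set w : EuclideanSpace ℝ (Fin d) × EuclideanSpace ℝ (Fin d) → ℝ :=
    fun p => ‖p.2 - u' p.1‖ with hw'
  have hwm : Measurable w := (measurable_snd.sub (hu'm.comp measurable_fst)).norm
  have hw0 : ∀ p, 0 ≤ w p := fun p => norm_nonneg _
  set c : EuclideanSpace ℝ (Fin d) → ℝ := fun x => ‖u' x - u x‖ with hc'
  have hcm : Measurable c := (hu'm.sub huc.measurable).norm
  have hc0 : ∀ x, 0 ≤ c x := fun x => norm_nonneg _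
  -- integrability of the cross term `c(x)² f(x,v)` over the product
  have hcf : Integrable (fun p : EuclideanSpace ℝ (Fin d) × EuclideanSpace ℝ (Fin d) =>
      c p.1 ^ 2 * f p) := by
    have hmeas : AEStronglyMeasurable
        (fun p : EuclideanSpace ℝ (Fin d) × EuclideanSpace ℝ (Fin d) => c p.1 ^ 2 * f p)
        ((volume : Measure (EuclideanSpace ℝ (Fin d))).prod volume) :=
      (((hcm.comp measurable_fst).pow_const 2).mul hfm).aestronglyMeasurable
    have : Integrable (fun p : EuclideanSpace ℝ (Fin d) × EuclideanSpace ℝ (Fin d) =>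
        c p.1 ^ 2 * f p) ((volume : Measure (EuclideanSpace ℝ (Fin d))).prod volume) := by
      rw [integrable_prod_iff hmeas]
      constructor
      · filter_upwards [hfi'.prod_right_ae] with x hx
        exact hx.const_mul _
      · have heq : (fun x => ∫ v, ‖c x ^ 2 * f (x, v)‖) = fun x => ρ' x * c x ^ 2 := by
          funext x
          have hcongr : (fun v => ‖c x ^ 2 * f (x, v)‖) = fun v => c x ^ 2 * f (x, v) := by
            funext v
            rw [Real.norm_eq_abs, abs_of_nonneg (mul_nonneg (sq_nonneg _) (hf0 _))]
          rw [hcongr, integral_const_mul, ← hρ'x, mul_comm]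
        rw [heq]
        have : (fun x => ρ' x * c x ^ 2) = fun x => ρ' x * ‖u' x - u x‖ ^ 2 := by
          funext x; simp only [hc']
        rw [this]
        exact h3
    exact this
  -- integrability of w² f and w f
  have hw2f : Integrable (fun p : EuclideanSpace ℝ (Fin d) × EuclideanSpace ℝ (Fin d) =>
      w p ^ 2 * f p) := by
    refine Integrable.mono' (((hmom2.const_mul 3).add (hfi.const_mul (3 * M ^ 2))).add
      (hcf.const_mul 3)) ((hwm.pow_const 2).mul hfm).aestronglyMeasurable
      (Filter.Eventually.of_forall fun p => ?_)
    simp only [Pi.add_apply]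
    rw [Real.norm_eq_abs, abs_of_nonneg (mul_nonneg (sq_nonneg _) (hf0 _))]
    have h1 : w p ≤ ‖p.2‖ + M + c p.1 := by
      have hsplit : p.2 - u' p.1 = (p.2 - u p.1) + (u p.1 - u' p.1) := by abel
      simp only [hw', hc']
      rw [hsplit]
      calc ‖(p.2 - u p.1) + (u p.1 - u' p.1)‖ ≤ ‖p.2 - u p.1‖ + ‖u p.1 - u' p.1‖ :=
            norm_add_le _ _
        _ ≤ (‖p.2‖ + ‖u p.1‖) + ‖u' p.1 - u p.1‖ := by
            rw [norm_sub_rev (u p.1)]; exact add_le_add_left (norm_sub_le _ _) _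
        _ ≤ ‖p.2‖ + M + ‖u' p.1 - u p.1‖ := by
            have := hM p.1; linarith
    have h2 : w p ^ 2 ≤ 3 * ‖p.2‖ ^ 2 + 3 * M ^ 2 + 3 * c p.1 ^ 2 := by
      have hw0' := hw0 p
      have hn : (0:ℝ) ≤ ‖p.2‖ := norm_nonneg _
      have hcn := hc0 p.1
      have hMn : (0:ℝ) ≤ M := le_trans (norm_nonneg _) (hM p.1)
      have hsq : w p ^ 2 ≤ (‖p.2‖ + M + c p.1) ^ 2 := by
        apply pow_le_pow_left₀ hw0' h1
      nlinarith [sq_nonneg (‖p.2‖ - M), sq_nonneg (‖p.2‖ - c p.1), sq_nonneg (M - c p.1)]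
    nlinarith [mul_le_mul_of_nonneg_right h2 (hf0 p), hf0 p]
  have hwf : Integrable (fun p : EuclideanSpace ℝ (Fin d) × EuclideanSpace ℝ (Fin d) =>
      w p * f p) := by
    refine Integrable.mono' (hfi.add hw2f) (hwm.mul hfm).aestronglyMeasurable
      (Filter.Eventually.of_forall fun p => ?_)
    simp only [Pi.add_apply]
    rw [Real.norm_eq_abs, abs_of_nonneg (mul_nonneg (hw0 p) (hf0 p))]
    have h1 : w p ≤ 1 + w p ^ 2 := by nlinarith [hw0 p]
    nlinarith [mul_le_mul_of_nonneg_right h1 (hf0 p), hf0 p]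
  -- integrability of bounded × integrable products
  have hgim : Measurable (fun p : EuclideanSpace ℝ (Fin d) × EuclideanSpace ℝ (Fin d) =>
      φ (p.1, u' p.1)) :=
    hφc.measurable.comp (measurable_fst.prodMk (hu'm.comp measurable_fst))
  have hgi : Integrable (fun p : EuclideanSpace ℝ (Fin d) × EuclideanSpace ℝ (Fin d) =>
      φ (p.1, u' p.1) * f p) :=
    hfi.bdd_mul hgim.aestronglyMeasurable (Filter.Eventually.of_forall fun p => by
      rw [Real.norm_eq_abs]; exact hφb _)
  have hφfi : Integrable (fun p : EuclideanSpace ℝ (Fin d) × EuclideanSpace ℝ (Fin d) =>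
      φ p * f p) :=
    hfi.bdd_mul hφc.measurable.aestronglyMeasurable (Filter.Eventually.of_forall fun p => by
      rw [Real.norm_eq_abs]; exact hφb _)
  -- Step 1: replace v by u'(x)
  have step1 : |(∫ p, φ p * f p) - ∫ p, φ (p.1, u' p.1) * f p|
      ≤ Real.sqrt (∫ x, ρ' x) * Real.sqrt (∫ p, w p ^ 2 * f p) := by
    rw [← integral_sub hφfi hgi]
    calc |∫ p, (φ p * f p - φ (p.1, u' p.1) * f p)|
        ≤ ∫ p, |φ p * f p - φ (p.1, u' p.1) * f p| := abs_int_le_int_abs _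
      _ ≤ ∫ p, w p * f p := by
          refine integral_mono (hφfi.sub hgi).abs hwf fun p => ?_
          rw [← sub_mul, abs_mul, abs_of_nonneg (hf0 p)]
          refine mul_le_mul_of_nonneg_right ?_ (hf0 p)
          have h := hφ' p (p.1, u' p.1)
          simpa [hw'] using h
      _ ≤ Real.sqrt (∫ p, f p) * Real.sqrt (∫ p, w p ^ 2 * f p) :=
          cs_weighted hw0 hf0 hfi hwf hw2f
      _ = Real.sqrt (∫ x, ρ' x) * Real.sqrt (∫ p, w p ^ 2 * f p) := by rw [hAeq]
  -- Fubini: ∫∫ φ(x, u'(x)) f = ∫ φ(x, u'(x)) ρ'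
  have hT12 : ∫ p, φ (p.1, u' p.1) * f p = ∫ x, φ (x, u' x) * ρ' x := by
    rw [Measure.volume_eq_prod, integral_prod _ hgi]
    refine integral_congr_ae (Filter.Eventually.of_forall fun x => ?_)
    show ∫ v, φ (x, u' x) * f (x, v) = φ (x, u' x) * ρ' x
    rw [integral_const_mul, hρ'x]
  -- Step 2: replace u' by u under ρ'
  have hψ'm : Measurable (fun x : EuclideanSpace ℝ (Fin d) => φ (x, u' x)) :=
    hφc.measurable.comp (measurable_id.prodMk hu'm)
  have hψm : Measurable (fun x : EuclideanSpace ℝ (Fin d) => φ (x, u x)) :=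
    hφc.measurable.comp (measurable_id.prodMk huc.measurable)
  have hψ'i : Integrable (fun x => φ (x, u' x) * ρ' x) :=
    hρ'i.bdd_mul hψ'm.aestronglyMeasurable (Filter.Eventually.of_forall fun x => by
      rw [Real.norm_eq_abs]; exact hφb _)
  have hψρ'i : Integrable (fun x => φ (x, u x) * ρ' x) :=
    hρ'i.bdd_mul hψm.aestronglyMeasurable (Filter.Eventually.of_forall fun x => by
      rw [Real.norm_eq_abs]; exact hφb _)
  have hψρi : Integrable (fun x => φ (x, u x) * ρ x) :=
    hρi.bdd_mul hψm.aestronglyMeasurable (Filter.Eventually.of_forall fun x => by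
      rw [Real.norm_eq_abs]; exact hφb _)
  have hc2ρ' : Integrable (fun x => c x ^ 2 * ρ' x) := by
    have heq : (fun x => c x ^ 2 * ρ' x) = fun x => ρ' x * ‖u' x - u x‖ ^ 2 := by
      funext x; simp only [hc']; ring
    rw [heq]; exact h3
  have hcρ' : Integrable (fun x => c x * ρ' x) := by
    refine Integrable.mono' (hρ'i.add hc2ρ')
      (hcm.aestronglyMeasurable.mul hρ'i.aestronglyMeasurable)
      (Filter.Eventually.of_forall fun x => ?_)
    simp only [Pi.add_apply]
    rw [Real.norm_eq_abs, abs_of_nonneg (mul_nonneg (hc0 x) (hρ'0 x))]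
    have h1 : c x ≤ 1 + c x ^ 2 := by nlinarith [hc0 x]
    nlinarith [mul_le_mul_of_nonneg_right h1 (hρ'0 x), hρ'0 x]
  have step2 : |(∫ x, φ (x, u' x) * ρ' x) - ∫ x, φ (x, u x) * ρ' x|
      ≤ Real.sqrt (∫ x, ρ' x) * Real.sqrt (∫ x, ρ' x * ‖u' x - u x‖ ^ 2) := by
    have hS2 : ∫ x, c x ^ 2 * ρ' x = ∫ x, ρ' x * ‖u' x - u x‖ ^ 2 := by
      refine integral_congr_ae (Filter.Eventually.of_forall fun x => ?_)
      simp only [hc']; ring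
    rw [← integral_sub hψ'i hψρ'i, ← hS2]
    calc |∫ x, (φ (x, u' x) * ρ' x - φ (x, u x) * ρ' x)|
        ≤ ∫ x, |φ (x, u' x) * ρ' x - φ (x, u x) * ρ' x| := abs_int_le_int_abs _
      _ ≤ ∫ x, c x * ρ' x := by
          refine integral_mono (hψ'i.sub hψρ'i).abs hcρ' fun x => ?_
          rw [← sub_mul, abs_mul, abs_of_nonneg (hρ'0 x)]
          refine mul_le_mul_of_nonneg_right ?_ (hρ'0 x)
          have h := hφ' (x, u' x) (x, u x)
          simpa [hc'] using h
      _ ≤ Real.sqrt (∫ x, ρ' x) * Real.sqrt (∫ x, c x ^ 2 * ρ' x) :=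
          cs_weighted hc0 hρ'0 hρ'i hcρ' hc2ρ'
  -- Step 3: replace ρ' by ρ using the BL distance
  have step3 : |(∫ x, φ (x, u x) * ρ' x) - ∫ x, φ (x, u x) * ρ x|
      ≤ (1 + (L : ℝ)) * dBL ρ' ρ := by
    set ψ : EuclideanSpace ℝ (Fin d) → ℝ := fun x => φ (x, u x) with hψ'
    have hLpos : (0:ℝ) < 1 + (L : ℝ) := by positivity
    have hinv0 : (0:ℝ) ≤ (1 + (L : ℝ))⁻¹ := le_of_lt (inv_pos.mpr hLpos)
    have hψb : ∀ x, |ψ x| ≤ 1 := fun x => hφb _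
    have hψl : ∀ x y, |ψ x - ψ y| ≤ (1 + (L : ℝ)) * ‖x - y‖ := by
      intro x y
      refine (hφ' (x, u x) (y, u y)).trans ?_
      have h2 : ‖u x - u y‖ ≤ (L : ℝ) * ‖x - y‖ := by
        have := hL.dist_le_mul x y
        rwa [dist_eq_norm, dist_eq_norm] at this
      have hdist : (1 + (L : ℝ)) * ‖x - y‖ = ‖x - y‖ + (L : ℝ) * ‖x - y‖ := by ring
      rw [hdist]
      show ‖x - y‖ + ‖u x - u y‖ ≤ ‖x - y‖ + (L : ℝ) * ‖x - y‖
      linarith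
    set ψ₀ : EuclideanSpace ℝ (Fin d) → ℝ := fun x => (1 + (L : ℝ))⁻¹ * ψ x with hψ₀'
    have hψ₀b : ∀ x, |ψ₀ x| ≤ 1 := by
      intro x
      simp only [hψ₀']
      rw [abs_mul, abs_of_nonneg hinv0]
      calc (1 + (L : ℝ))⁻¹ * |ψ x| ≤ (1 + (L : ℝ))⁻¹ * (1 + (L : ℝ)) := by
            refine mul_le_mul_of_nonneg_left ((hψb x).trans ?_) hinv0
            have := L.coe_nonneg; linarith
        _ = 1 := inv_mul_cancel₀ hLpos.ne'
    have hψ₀l : LipschitzWith 1 ψ₀ := by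
      refine LipschitzWith.of_dist_le_mul fun x y => ?_
      rw [Real.dist_eq]
      simp only [hψ₀']
      rw [← mul_sub, abs_mul, abs_of_nonneg hinv0]
      calc (1 + (L : ℝ))⁻¹ * |ψ x - ψ y|
          ≤ (1 + (L : ℝ))⁻¹ * ((1 + (L : ℝ)) * ‖x - y‖) :=
            mul_le_mul_of_nonneg_left (hψl x y) hinv0
        _ = ‖x - y‖ := by
            rw [inv_mul_cancel_left₀ hLpos.ne']
        _ = (1 : NNReal) * dist x y := by rw [dist_eq_norm]; simp
    have hbdd : BddAbove (Set.range fun ψ' : {ψ' : EuclideanSpace ℝ (Fin d) → ℝ //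
        (∀ x, |ψ' x| ≤ 1) ∧ LipschitzWith 1 ψ'} => |∫ x, ψ'.1 x * (ρ' x - ρ x)|) := by
      refine ⟨∫ x, |ρ' x - ρ x|, ?_⟩
      rintro r ⟨⟨ψ', hb, hlip⟩, rfl⟩
      have hint : Integrable (fun x => ψ' x * (ρ' x - ρ x)) :=
        (hρ'i.sub hρi).bdd_mul hlip.continuous.measurable.aestronglyMeasurable
          (Filter.Eventually.of_forall fun x => by rw [Real.norm_eq_abs]; exact hb x)
      calc |∫ x, ψ' x * (ρ' x - ρ x)| ≤ ∫ x, |ψ' x * (ρ' x - ρ x)| := abs_int_le_int_abs _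
        _ ≤ ∫ x, |ρ' x - ρ x| := by
            refine integral_mono hint.abs (hρ'i.sub hρi).abs fun x => ?_
            rw [abs_mul]
            calc |ψ' x| * |ρ' x - ρ x| ≤ 1 * |ρ' x - ρ x| :=
                  mul_le_mul_of_nonneg_right (hb x) (abs_nonneg _)
              _ = |ρ' x - ρ x| := one_mul _
    have hle : |∫ x, ψ₀ x * (ρ' x - ρ x)| ≤ dBL ρ' ρ :=
      le_ciSup hbdd ⟨ψ₀, hψ₀b, hψ₀l⟩
    have heq : ∫ x, ψ₀ x * (ρ' x - ρ x) = (1 + (L : ℝ))⁻¹ * ∫ x, ψ x * (ρ' x - ρ x) := by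
      rw [← integral_const_mul]
      refine integral_congr_ae (Filter.Eventually.of_forall fun x => ?_)
      simp only [hψ₀']; ring
    have heq2 : (∫ x, φ (x, u x) * ρ' x) - ∫ x, φ (x, u x) * ρ x
        = ∫ x, ψ x * (ρ' x - ρ x) := by
      rw [← integral_sub hψρ'i hψρi]
      refine integral_congr_ae (Filter.Eventually.of_forall fun x => ?_)
      simp only [hψ']; ring
    rw [heq2]
    rw [heq, abs_mul, abs_of_nonneg hinv0] at hle
    calc |∫ x, ψ x * (ρ' x - ρ x)|
        = (1 + (L : ℝ)) * ((1 + (L : ℝ))⁻¹ * |∫ x, ψ x * (ρ' x - ρ x)|) := by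
          rw [mul_inv_cancel_left₀ hLpos.ne']
      _ ≤ (1 + (L : ℝ)) * dBL ρ' ρ := mul_le_mul_of_nonneg_left hle (le_of_lt hLpos)
  -- Combine everything
  have step2' : |(∫ p, φ (p.1, u' p.1) * f p) - ∫ x, φ (x, u x) * ρ' x|
      ≤ Real.sqrt (∫ x, ρ' x) * Real.sqrt (∫ x, ρ' x * ‖u' x - u x‖ ^ 2) := by
    rw [hT12]; exact step2
  have hS1eq : (∫ p, ‖p.2 - u' p.1‖ ^ 2 * f p) = ∫ p, w p ^ 2 * f p := rfl
  calc |(∫ p, φ p * f p) - ∫ x, φ (x, u x) * ρ x|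
      ≤ |(∫ p, φ p * f p) - ∫ p, φ (p.1, u' p.1) * f p|
        + |(∫ p, φ (p.1, u' p.1) * f p) - ∫ x, φ (x, u x) * ρ' x|
        + |(∫ x, φ (x, u x) * ρ' x) - ∫ x, φ (x, u x) * ρ x| := by
        have h1 := abs_sub_le (∫ p, φ p * f p) (∫ p, φ (p.1, u' p.1) * f p)
          (∫ x, φ (x, u x) * ρ x)
        have h2 := abs_sub_le (∫ p, φ (p.1, u' p.1) * f p) (∫ x, φ (x, u x) * ρ' x)
          (∫ x, φ (x, u x) * ρ x)
        linarith
    _ ≤ Real.sqrt (∫ x, ρ' x) * Real.sqrt (∫ p, w p ^ 2 * f p)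
        + Real.sqrt (∫ x, ρ' x) * Real.sqrt (∫ x, ρ' x * ‖u' x - u x‖ ^ 2)
        + (1 + (L : ℝ)) * dBL ρ' ρ := add_le_add (add_le_add step1 step2') step3
    _ = Real.sqrt (∫ x, ρ' x) *
        (Real.sqrt (∫ p, ‖p.2 - u' p.1‖ ^ 2 * f p)
          + Real.sqrt (∫ x, ρ' x * ‖u' x - u x‖ ^ 2))
        + (1 + (L : ℝ)) * dBL ρ' ρ := by
        rw [hS1eq]; ring
end

section
/- Let W : ℝ^d → ℝ be differentiable such that each partial derivative ∂_i W is bounded by K and Lipschitz with constant K (i.e. ∇W ∈ W^{1,∞} with norm at most K). Let ρ, ρ̄ : ℝ^d → [0, ∞) be integrable. Then: (a) for every x ∈ ℝ^d and every i, |(∂_i W ⋆ (ρ − ρ̄))(x)| ≤ K · d_BL(ρ, ρ̄); and (b) if moreover ū, u : ℝ^d → ℝ^d are measurable with ρ̄|ū − u|² integrable, then |∫_{ℝ^d} ρ̄(x)(ū(x) − u(x)) · (∇W ⋆ (ρ − ρ̄))(x) dx| ≤ √d · K · d_BL(ρ, ρ̄) · (∫_{ℝ^d} ρ̄ dx)^{1/2}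 (∫_{ℝ^d} ρ̄ |ū − u|² dx)^{1/2}. -/
open MeasureTheory
open scoped RealInnerProductSpace

lemma dBL_bddAbove {d : ℕ} {ρ₁ ρ₂ : EuclideanSpace ℝ (Fin d) → ℝ}
    (h : Integrable (fun x => ρ₁ x - ρ₂ x)) :
    BddAbove (Set.range fun ψ : {ψ : EuclideanSpace ℝ (Fin d) → ℝ //
        (∀ x, |ψ x| ≤ 1) ∧ LipschitzWith 1 ψ} => |∫ x, ψ.1 x * (ρ₁ x - ρ₂ x)|) := by
  refine ⟨∫ x, |ρ₁ x - ρ₂ x|, ?_⟩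
  rintro _ ⟨ψ, rfl⟩
  calc |∫ x, ψ.1 x * (ρ₁ x - ρ₂ x)| ≤ ∫ x, ‖ψ.1 x * (ρ₁ x - ρ₂ x)‖ := by
        rw [← Real.norm_eq_abs]; exact norm_integral_le_integral_norm _
    _ ≤ ∫ x, |ρ₁ x - ρ₂ x| := by
        refine integral_mono_of_nonneg (Filter.Eventually.of_forall fun x => norm_nonneg _)
          h.abs (Filter.Eventually.of_forall fun x => ?_)
        calc ‖ψ.1 x * (ρ₁ x - ρ₂ x)‖ = |ψ.1 x| * |ρ₁ x - ρ₂ x| := by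
              rw [Real.norm_eq_abs, abs_mul]
          _ ≤ |ρ₁ x - ρ₂ x| := mul_le_of_le_one_left (abs_nonneg _) (ψ.2.1 x)

lemma dBL_nonneg {d : ℕ} {ρ₁ ρ₂ : EuclideanSpace ℝ (Fin d) → ℝ}
    (h : Integrable (fun x => ρ₁ x - ρ₂ x)) : 0 ≤ dBL ρ₁ ρ₂ := by
  have := le_ciSup (dBL_bddAbove h)
    (⟨fun _ => 0, fun x => by simp, LipschitzWith.const' 0⟩ :
      {ψ : EuclideanSpace ℝ (Fin d) → ℝ // (∀ x, |ψ x| ≤ 1) ∧ LipschitzWith 1 ψ})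
  exact le_trans (abs_nonneg _) this

/-- Abstract form of part (a). -/
lemma abs_integral_mul_le_dBL {d : ℕ} (K : NNReal) (φ : EuclideanSpace ℝ (Fin d) → ℝ)
    (hbd : ∀ y, |φ y| ≤ K) (hlip : LipschitzWith K φ)
    {ρ ρ' : EuclideanSpace ℝ (Fin d) → ℝ}
    (hρi : Integrable ρ) (hρ'i : Integrable ρ') :
    |∫ y, (ρ y - ρ' y) * φ y| ≤ K * dBL ρ ρ' := by
  have hint : Integrable (fun y => ρ y - ρ' y) := hρi.sub hρ'i
  rcases eq_zero_or_pos K with hK0 | hK0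
  · subst hK0
    have hφ : ∀ y, φ y = 0 := by
      intro y
      have h1 := hbd y
      simp only [NNReal.coe_zero] at h1
      exact abs_eq_zero.mp (le_antisymm h1 (abs_nonneg _))
    simp [hφ]
  · have hK : (0:ℝ) < (K:ℝ) := NNReal.coe_pos.mpr hK0
    have hKne : (K:ℝ) ≠ 0 := ne_of_gt hK
    have hinvnn : (0:ℝ) ≤ (K:ℝ)⁻¹ := inv_nonneg.mpr hK.le
    have habsinv : |(K:ℝ)⁻¹| = (K:ℝ)⁻¹ := abs_of_nonneg hinvnn
    set ψ : EuclideanSpace ℝ (Fin d) → ℝ := fun y => (K : ℝ)⁻¹ * φ y with hψdef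
    have hψbd : ∀ y, |ψ y| ≤ 1 := by
      intro y
      calc |ψ y| = |(K:ℝ)⁻¹| * |φ y| := abs_mul _ _
        _ = (K:ℝ)⁻¹ * |φ y| := by rw [habsinv]
        _ ≤ (K : ℝ)⁻¹ * K := mul_le_mul_of_nonneg_left (hbd y) hinvnn
        _ = 1 := inv_mul_cancel₀ hKne
    have hψlip : LipschitzWith 1 ψ := by
      refine LipschitzWith.of_dist_le_mul fun a b => ?_
      rw [NNReal.coe_one, one_mul]
      have h1 : dist (ψ a) (ψ b) = (K : ℝ)⁻¹ * dist (φ a) (φ b) := by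
        rw [Real.dist_eq, Real.dist_eq]
        calc |ψ a - ψ b| = |(K:ℝ)⁻¹| * |φ a - φ b| := by rw [← abs_mul, mul_sub]
          _ = (K:ℝ)⁻¹ * |φ a - φ b| := by rw [habsinv]
      have h2 : dist (φ a) (φ b) ≤ K * dist a b := hlip.dist_le_mul a b
      rw [h1]
      calc (K : ℝ)⁻¹ * dist (φ a) (φ b) ≤ (K : ℝ)⁻¹ * ((K : ℝ) * dist a b) :=
            mul_le_mul_of_nonneg_left h2 hinvnn
        _ = dist a b := inv_mul_cancel_left₀ hKne _
    have key : ∫ y, ψ y * (ρ y - ρ' y) = (K : ℝ)⁻¹ * ∫ y, (ρ y - ρ' y) * φ y := by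
      rw [← integral_const_mul]
      congr 1
      funext y
      show (K : ℝ)⁻¹ * φ y * (ρ y - ρ' y) = _
      ring
    have hle : |∫ y, ψ y * (ρ y - ρ' y)| ≤ dBL ρ ρ' :=
      le_ciSup (dBL_bddAbove hint)
        (⟨ψ, hψbd, hψlip⟩ : {ψ : EuclideanSpace ℝ (Fin d) → ℝ //
          (∀ x, |ψ x| ≤ 1) ∧ LipschitzWith 1 ψ})
    have habs : |∫ y, ψ y * (ρ y - ρ' y)| = (K : ℝ)⁻¹ * |∫ y, (ρ y - ρ' y) * φ y| := by
      rw [key, abs_mul, habsinv]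
    rw [habs] at hle
    calc |∫ y, (ρ y - ρ' y) * φ y|
        = (K : ℝ) * ((K : ℝ)⁻¹ * |∫ y, (ρ y - ρ' y) * φ y|) :=
          (mul_inv_cancel_left₀ hKne _).symm
      _ ≤ (K : ℝ) * dBL ρ ρ' := mul_le_mul_of_nonneg_left hle hK.le

/-- For `∇W ∈ W^{1,∞}` with each partial derivative `∂ᵢW` bounded by `K` and
`K`-Lipschitz: (a) `|(∂ᵢW ⋆ (ρ − ρ̄))(x)| ≤ K d_BL(ρ, ρ̄)` pointwise; and
(b) `|∫ ρ̄ (ū − u) · (∇W ⋆ (ρ − ρ̄))| ≤ √d K d_BL(ρ, ρ̄) (∫ρ̄)^{1/2} (∫ρ̄|ū−u|²)^{1/2}`. -/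
theorem stmt_16 {d : ℕ} (W : EuclideanSpace ℝ (Fin d) → ℝ)
    (hW : Differentiable ℝ W) (K : NNReal)
    (hbd : ∀ (i : Fin d) (x : EuclideanSpace ℝ (Fin d)), |gradient W x i| ≤ K)
    (hlip : ∀ i : Fin d, LipschitzWith K fun x => gradient W x i)
    (ρ ρ' : EuclideanSpace ℝ (Fin d) → ℝ)
    (hρ0 : ∀ x, 0 ≤ ρ x) (hρ'0 : ∀ x, 0 ≤ ρ' x)
    (hρi : Integrable ρ) (hρ'i : Integrable ρ') :
    (∀ (x : EuclideanSpace ℝ (Fin d)) (i : Fin d),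
        |∫ y, (ρ y - ρ' y) * gradient W (x - y) i| ≤ K * dBL ρ ρ') ∧
      ∀ u' u : EuclideanSpace ℝ (Fin d) → EuclideanSpace ℝ (Fin d),
        Measurable u' → Measurable u →
        Integrable (fun x => ρ' x * ‖u' x - u x‖ ^ 2) →
        |∫ x, ρ' x * ⟪u' x - u x, ∫ y, (ρ y - ρ' y) • gradient W (x - y)⟫| ≤
          Real.sqrt d * K * dBL ρ ρ' * Real.sqrt (∫ x, ρ' x) *
            Real.sqrt (∫ x, ρ' x * ‖u' x - u x‖ ^ 2) := by
  have hint : Integrable (fun y => ρ y - ρ' y) := hρi.sub hρ'i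
  -- Part (a)
  have parta : ∀ (x : EuclideanSpace ℝ (Fin d)) (i : Fin d),
      |∫ y, (ρ y - ρ' y) * gradient W (x - y) i| ≤ K * dBL ρ ρ' := by
    intro x i
    have hsub : LipschitzWith 1 (fun y : EuclideanSpace ℝ (Fin d) => x - y) :=
      LipschitzWith.of_dist_le_mul fun a b => by rw [dist_sub_left]; simp
    have hcomp : LipschitzWith K (fun y => gradient W (x - y) i) := by
      have := (hlip i).comp hsub
      rw [mul_one] at this
      exact this
    exact abs_integral_mul_le_dBL K (fun y => gradient W (x - y) i)
      (fun y => hbd i (x - y)) hcomp hρi hρ'i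
  refine ⟨parta, ?_⟩
  -- Part (b)
  intro u' u hu' hu hsq
  have hdnn : 0 ≤ dBL ρ ρ' := dBL_nonneg hint
  set C : ℝ := Real.sqrt d * K * dBL ρ ρ' with hCdef
  have hCnn : 0 ≤ C := by positivity
  -- continuity of the gradient
  have hgcont : Continuous (fun z => gradient W z) := by
    have h2 : Continuous fun z => (EuclideanSpace.equiv (Fin d) ℝ) (gradient W z) :=
      continuous_pi fun i => (hlip i).continuous
    exact ((EuclideanSpace.equiv (Fin d) ℝ).symm.continuous.comp h2)
  -- bound on the gradient norm
  have hgbd : ∀ z, ‖gradient W z‖ ≤ Real.sqrt d * K := by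
    intro z
    rw [EuclideanSpace.norm_eq]
    calc Real.sqrt (∑ i, ‖gradient W z i‖ ^ 2) ≤ Real.sqrt (∑ _i : Fin d, (K : ℝ) ^ 2) := by
          refine Real.sqrt_le_sqrt (Finset.sum_le_sum fun i _ => ?_)
          rw [Real.norm_eq_abs]
          exact pow_le_pow_left₀ (abs_nonneg _) (hbd i z) 2
      _ = Real.sqrt ((d : ℝ) * (K : ℝ) ^ 2) := by
          rw [Finset.sum_const, Finset.card_univ, Fintype.card_fin, nsmul_eq_mul]
      _ = Real.sqrt d * K := by
          rw [Real.sqrt_mul (Nat.cast_nonneg d), Real.sqrt_sq K.coe_nonneg]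
  -- integrability of the convolution integrand
  have hgint : ∀ x, Integrable (fun y => (ρ y - ρ' y) • gradient W (x - y)) := by
    intro x
    have hm : AEStronglyMeasurable (fun y => (ρ y - ρ' y) • gradient W (x - y)) volume :=
      hint.aestronglyMeasurable.smul
        ((hgcont.comp (continuous_const.sub continuous_id)).aestronglyMeasurable)
    refine (hint.norm.const_mul (Real.sqrt d * K)).mono' hm
      (Filter.Eventually.of_forall fun y => ?_)
    calc ‖(ρ y - ρ' y) • gradient W (x - y)‖ = ‖ρ y - ρ' y‖ * ‖gradient W (x - y)‖ :=
          norm_smul _ _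
      _ ≤ ‖ρ y - ρ' y‖ * (Real.sqrt d * K) :=
          mul_le_mul_of_nonneg_left (hgbd _) (norm_nonneg _)
      _ = Real.sqrt d * K * ‖ρ y - ρ' y‖ := by ring
  -- coordinates of the convolution
  have hFcoord : ∀ (x : EuclideanSpace ℝ (Fin d)) (i : Fin d),
      (∫ y, (ρ y - ρ' y) • gradient W (x - y)) i =
        ∫ y, (ρ y - ρ' y) * gradient W (x - y) i := by
    intro x i
    have := (EuclideanSpace.proj (𝕜 := ℝ) i).integral_comp_comm (hgint x)
    simpa using this.symm
  -- norm bound on the convolution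
  have hFbd : ∀ x, ‖∫ y, (ρ y - ρ' y) • gradient W (x - y)‖ ≤ C := by
    intro x
    rw [EuclideanSpace.norm_eq]
    calc Real.sqrt (∑ i, ‖(∫ y, (ρ y - ρ' y) • gradient W (x - y)) i‖ ^ 2)
        ≤ Real.sqrt (∑ _i : Fin d, ((K : ℝ) * dBL ρ ρ') ^ 2) := by
          refine Real.sqrt_le_sqrt (Finset.sum_le_sum fun i _ => ?_)
          rw [Real.norm_eq_abs, hFcoord x i]
          exact pow_le_pow_left₀ (abs_nonneg _) (parta x i) 2
      _ = Real.sqrt ((d : ℝ) * ((K : ℝ) * dBL ρ ρ') ^ 2) := by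
          rw [Finset.sum_const, Finset.card_univ, Fintype.card_fin, nsmul_eq_mul]
      _ = C := by
          rw [Real.sqrt_mul (Nat.cast_nonneg d),
            Real.sqrt_sq (by positivity : (0:ℝ) ≤ (K : ℝ) * dBL ρ ρ'), hCdef]
          ring
  -- integrability of ρ' ‖u' - u‖
  have hmeas1 : AEStronglyMeasurable (fun x => ρ' x * ‖u' x - u x‖) volume :=
    hρ'i.aestronglyMeasurable.mul ((hu'.sub hu).norm).aestronglyMeasurable
  have h1 : Integrable (fun x => ρ' x * ‖u' x - u x‖) := by
    refine ((hρ'i.add hsq).div_const 2).mono' hmeas1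
      (Filter.Eventually.of_forall fun x => ?_)
    have hnn : 0 ≤ ρ' x * ‖u' x - u x‖ := mul_nonneg (hρ'0 x) (norm_nonneg _)
    calc ‖ρ' x * ‖u' x - u x‖‖ = ρ' x * ‖u' x - u x‖ := by
          rw [Real.norm_eq_abs, abs_of_nonneg hnn]
      _ ≤ (ρ' x + ρ' x * ‖u' x - u x‖ ^ 2) / 2 := by
          nlinarith [sq_nonneg (‖u' x - u x‖ - 1), hρ'0 x,
            mul_nonneg (hρ'0 x) (sq_nonneg (‖u' x - u x‖ - 1))]
  -- Cauchy-Schwarz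
  have CS : ∫ x, ρ' x * ‖u' x - u x‖ ≤
      Real.sqrt (∫ x, ρ' x) * Real.sqrt (∫ x, ρ' x * ‖u' x - u x‖ ^ 2) := by
    set f : EuclideanSpace ℝ (Fin d) → ℝ := fun x => Real.sqrt (ρ' x) with hfdef
    set g : EuclideanSpace ℝ (Fin d) → ℝ := fun x => Real.sqrt (ρ' x) * ‖u' x - u x‖ with hgdef
    have hfm : AEStronglyMeasurable f volume :=
      Real.continuous_sqrt.comp_aestronglyMeasurable hρ'i.aestronglyMeasurable
    have hgm : AEStronglyMeasurable g volume :=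
      hfm.mul ((hu'.sub hu).norm).aestronglyMeasurable
    have hfsq : ∀ x, f x ^ 2 = ρ' x := fun x => Real.sq_sqrt (hρ'0 x)
    have hgsq : ∀ x, g x ^ 2 = ρ' x * ‖u' x - u x‖ ^ 2 := by
      intro x
      calc g x ^ 2 = Real.sqrt (ρ' x) ^ 2 * ‖u' x - u x‖ ^ 2 := by rw [hgdef]; ring
        _ = ρ' x * ‖u' x - u x‖ ^ 2 := by rw [Real.sq_sqrt (hρ'0 x)]
    have hfL : MemLp f (ENNReal.ofReal 2) volume := by
      rw [show ENNReal.ofReal 2 = 2 by norm_num]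
      rw [memLp_two_iff_integrable_sq hfm]
      exact hρ'i.congr (Filter.Eventually.of_forall fun x => (hfsq x).symm)
    have hgL : MemLp g (ENNReal.ofReal 2) volume := by
      rw [show ENNReal.ofReal 2 = 2 by norm_num]
      rw [memLp_two_iff_integrable_sq hgm]
      exact hsq.congr (Filter.Eventually.of_forall fun x => (hgsq x).symm)
    have hconj : (2 : ℝ).HolderConjugate 2 := ⟨by norm_num, by norm_num, by norm_num⟩
    have key := integral_mul_le_Lp_mul_Lq_of_nonneg hconj
      (Filter.Eventually.of_forall fun x => Real.sqrt_nonneg (ρ' x))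
      (Filter.Eventually.of_forall fun x =>
        mul_nonneg (Real.sqrt_nonneg (ρ' x)) (norm_nonneg _)) hfL hgL
    simp_rw [show ((2:ℝ)) = ((2:ℕ):ℝ) by norm_num, Real.rpow_natCast] at key
    have hfg : ∀ x, f x * g x = ρ' x * ‖u' x - u x‖ := by
      intro x
      calc f x * g x = (Real.sqrt (ρ' x) * Real.sqrt (ρ' x)) * ‖u' x - u x‖ := by
            rw [hfdef, hgdef]; ring
        _ = ρ' x * ‖u' x - u x‖ := by rw [Real.mul_self_sqrt (hρ'0 x)]
    have e0 : ∫ x, ρ' x * ‖u' x - u x‖ = ∫ x, f x * g x :=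
      integral_congr_ae (Filter.Eventually.of_forall fun x => (hfg x).symm)
    have e1 : ∫ x, f x ^ (2:ℕ) = ∫ x, ρ' x :=
      integral_congr_ae (Filter.Eventually.of_forall fun x => hfsq x)
    have e2 : ∫ x, g x ^ (2:ℕ) = ∫ x, ρ' x * ‖u' x - u x‖ ^ 2 :=
      integral_congr_ae (Filter.Eventually.of_forall fun x => hgsq x)
    rw [e0]
    refine le_trans key (le_of_eq ?_)
    rw [e1, e2, Real.sqrt_eq_rpow, Real.sqrt_eq_rpow]
    norm_num
  -- main estimate
  calc |∫ x, ρ' x * ⟪u' x - u x, ∫ y, (ρ y - ρ' y) • gradient W (x - y)⟫|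
      ≤ ∫ x, ‖ρ' x * ⟪u' x - u x, ∫ y, (ρ y - ρ' y) • gradient W (x - y)⟫‖ := by
        rw [← Real.norm_eq_abs]; exact norm_integral_le_integral_norm _
    _ ≤ ∫ x, C * (ρ' x * ‖u' x - u x‖) := by
        refine integral_mono_of_nonneg (Filter.Eventually.of_forall fun x => norm_nonneg _)
          (h1.const_mul C) (Filter.Eventually.of_forall fun x => ?_)
        calc ‖ρ' x * ⟪u' x - u x, ∫ y, (ρ y - ρ' y) • gradient W (x - y)⟫‖
            = ρ' x * |⟪u' x - u x, ∫ y, (ρ y - ρ' y) • gradient W (x - y)⟫| := by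
              rw [Real.norm_eq_abs, abs_mul, abs_of_nonneg (hρ'0 x)]
          _ ≤ ρ' x * (‖u' x - u x‖ * ‖∫ y, (ρ y - ρ' y) • gradient W (x - y)‖) :=
              mul_le_mul_of_nonneg_left (abs_real_inner_le_norm _ _) (hρ'0 x)
          _ ≤ ρ' x * (‖u' x - u x‖ * C) := by
              refine mul_le_mul_of_nonneg_left ?_ (hρ'0 x)
              exact mul_le_mul_of_nonneg_left (hFbd x) (norm_nonneg _)
          _ = C * (ρ' x * ‖u' x - u x‖) := by ring
    _ = C * ∫ x, ρ' x * ‖u' x - u x‖ := integral_const_mul _ _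
    _ ≤ C * (Real.sqrt (∫ x, ρ' x) * Real.sqrt (∫ x, ρ' x * ‖u' x - u x‖ ^ 2)) :=
        mul_le_mul_of_nonneg_left CS hCnn
    _ = Real.sqrt d * K * dBL ρ ρ' * Real.sqrt (∫ x, ρ' x) *
          Real.sqrt (∫ x, ρ' x * ‖u' x - u x‖ ^ 2) := by rw [hCdef]; ring
end
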